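/- arXiv:2210.17139 — 2 statements merged into one kernel-verified Lean document; each statement's English description precedes it below -/
import Mathlib

section
/- Soundness and completeness of the axiomatization: for any set 𝒮 ⊆ L_Σ and any formula A ∈ L_Σ, 𝒮 ⊢_𝒜 A if and only if 𝒮 semantically implies A over bi-relational (Σ,𝒜)-models (i.e., for every bi-relational (Σ,𝒜)-model M and every world w of M, if M,w ⊩ B for all B ∈ 𝒮, then M,w ⊩ A). -/
namespace IGL

/-- An alphabet Σ: a nonempty countable type of characters partitioned into a
forward part and a backward part by an involutive converse operation. -/
structure Alphabet where
  Char : Type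
  nonempty : Nonempty Char
  countable : Countable Char
  fwd : Char → Prop
  conv : Char → Char
  conv_conv : ∀ x, conv (conv x) = x
  fwd_iff : ∀ x, fwd x ↔ ¬ fwd (conv x)

/-- Formulae of the intuitionistic multi-modal language `L_Σ`. -/
inductive Formula (C : Type) : Type
  | atom : ℕ → Formula C
  | bot  : Formula C
  | or   : Formula C → Formula C → Formula C
  | and  : Formula C → Formula C → Formula C
  | imp  : Formula C → Formula C → Formula C
  | dia  : C → Formula C → Formula C
  | box  : C → Formula C → Formula C

namespace Formula
/-- Intuitionistic negation `¬A := A ⊃ ⊥`. -/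
def neg {C : Type} (A : Formula C) : Formula C := A.imp Formula.bot
/-- `A ≡ B := (A ⊃ B) ∧ (B ⊃ A)`. -/
def equiv {C : Type} (A B : Formula C) : Formula C := (A.imp B).and (B.imp A)
end Formula

/-- Bi-relational Σ-models. -/
structure BiModel (α : Alphabet) where
  W : Type
  nonempty : Nonempty W
  le : W → W → Prop
  le_refl : ∀ w, le w w
  le_trans : ∀ w u v, le w u → le u v → le w v
  R : α.Char → W → W → Prop
  F1 : ∀ x w v v', R x w v → le v v' → ∃ w', le w w' ∧ R x w' v'
  F2 : ∀ x w w' v, le w w' → R x w v → ∃ v', R x w' v' ∧ le v v'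
  F3 : ∀ x w u, R x w u ↔ R (α.conv x) u w
  V : W → ℕ → Prop
  mono : ∀ w u, le w u → ∀ p, V w p → V u p

/-- Satisfaction `M,w ⊩ A`. -/
def Sat {α : Alphabet} (M : BiModel α) : M.W → Formula α.Char → Prop
  | w, Formula.atom p => M.V w p
  | _, Formula.bot => False
  | w, Formula.or A B => Sat M w A ∨ Sat M w B
  | w, Formula.and A B => Sat M w A ∧ Sat M w B
  | w, Formula.imp A B => ∀ w', M.le w w' → Sat M w' A → Sat M w' B
  | w, Formula.dia x A => ∃ v, M.R x w v ∧ Sat M v A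
  | w, Formula.box x A => ∀ w' v', M.le w w' → M.R x w' v' → Sat M v' A

/-- Axioms: seriality axioms `D_x` or intuitionistic path axioms
`(⟨x₁⟩⋯⟨xₙ⟩A ⊃ ⟨x⟩A) ∧ ([x]A ⊃ [x₁]⋯[xₙ]A)`, encoded by the character `x`
and the string `[x₁,…,xₙ]`. -/
inductive Ax (C : Type) : Type
  | ser : C → Ax C
  | ipa : C → List C → Ax C

/-- Composition of the accessibility relations along a string. -/
def BiModel.Rs {α : Alphabet} (M : BiModel α) : List α.Char → M.W → M.W → Prop
  | [], w, u => w = u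
  | x :: s, w, u => ∃ v, M.R x w v ∧ M.Rs s v u

/-- The frame condition corresponding to an axiom. -/
def SatisfiesAx {α : Alphabet} (M : BiModel α) : Ax α.Char → Prop
  | Ax.ser x => ∀ w, ∃ u, M.R x w u
  | Ax.ipa x s => ∀ w u, M.Rs s w u → M.R x w u

/-- A bi-relational (Σ,𝒜)-model. -/
def AModel {α : Alphabet} (𝒜 : Set (Ax α.Char)) (M : BiModel α) : Prop :=
  ∀ a ∈ 𝒜, SatisfiesAx M a

/-- `⟨x₁⟩⋯⟨xₙ⟩A`. -/
def dias {C : Type} : List C → Formula C → Formula C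
  | [], A => A
  | x :: s, A => Formula.dia x (dias s A)

/-- `[x₁]⋯[xₙ]A`. -/
def boxes {C : Type} : List C → Formula C → Formula C
  | [], A => A
  | x :: s, A => Formula.box x (boxes s A)

/-- The Hilbert system `H IK_m(Σ,𝒜)`. -/
inductive Hprf (α : Alphabet) (𝒜 : Set (Ax α.Char)) : Formula α.Char → Prop
  | ipl1 (A B : Formula α.Char) : Hprf α 𝒜 (A.imp (B.imp A))
  | ipl2 (A B C : Formula α.Char) : Hprf α 𝒜 ((A.imp (B.imp C)).imp ((A.imp B).imp (A.imp C)))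
  | ipl3 (A B : Formula α.Char) : Hprf α 𝒜 (A.imp (A.or B))
  | ipl4 (A B : Formula α.Char) : Hprf α 𝒜 (B.imp (A.or B))
  | ipl5 (A B C : Formula α.Char) : Hprf α 𝒜 ((A.imp C).imp ((B.imp C).imp ((A.or B).imp C)))
  | ipl6 (A B : Formula α.Char) : Hprf α 𝒜 ((A.and B).imp A)
  | ipl7 (A B : Formula α.Char) : Hprf α 𝒜 ((A.and B).imp B)
  | ipl8 (A B : Formula α.Char) : Hprf α 𝒜 (A.imp (B.imp (A.and B)))
  | ipl9 (A : Formula α.Char) : Hprf α 𝒜 (Formula.bot.imp A)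
  | axK (x : α.Char) (A B : Formula α.Char) : Hprf α 𝒜 ((Formula.box x (A.imp B)).imp ((Formula.box x A).imp (Formula.box x B)))
  | axBoxAnd (x : α.Char) (A B : Formula α.Char) : Hprf α 𝒜 ((Formula.box x (A.and B)).equiv ((Formula.box x A).and (Formula.box x B)))
  | axDiaOr (x : α.Char) (A B : Formula α.Char) : Hprf α 𝒜 ((Formula.dia x (A.or B)).equiv ((Formula.dia x A).or (Formula.dia x B)))
  | axKdia (x : α.Char) (A B : Formula α.Char) : Hprf α 𝒜 ((Formula.box x (A.imp B)).imp ((Formula.dia x A).imp (Formula.dia x B)))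
  | axBoxDia (x : α.Char) (A B : Formula α.Char) : Hprf α 𝒜 (((Formula.box x A).and (Formula.dia x B)).imp (Formula.dia x (A.and B)))
  | axNotDiaBot (x : α.Char) : Hprf α 𝒜 (Formula.dia x Formula.bot).neg
  | axConv (x : α.Char) (A : Formula α.Char) : Hprf α 𝒜 ((A.imp (Formula.box x (Formula.dia (α.conv x) A))).and
      ((Formula.dia x (Formula.box (α.conv x) A)).imp A))
  | axFS (x : α.Char) (A B : Formula α.Char) : Hprf α 𝒜 (((Formula.dia x A).imp (Formula.box x B)).imp (Formula.box x (A.imp B)))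
  | axDiaImp (x : α.Char) (A B : Formula α.Char) : Hprf α 𝒜 ((Formula.dia x (A.imp B)).imp ((Formula.box x A).imp (Formula.dia x B)))
  | axSer (x : α.Char) (A : Formula α.Char) (h : Ax.ser x ∈ 𝒜) : Hprf α 𝒜 ((Formula.box x A).imp (Formula.dia x A))
  | axIpa (x : α.Char) (s : List α.Char) (A : Formula α.Char) (h : Ax.ipa x s ∈ 𝒜) :
      Hprf α 𝒜 (((dias s A).imp (Formula.dia x A)).and ((Formula.box x A).imp (boxes s A)))
  | mp (A B : Formula α.Char) : Hprf α 𝒜 (A.imp B) → Hprf α 𝒜 A → Hprf α 𝒜 B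
  | nec (x : α.Char) (A : Formula α.Char) : Hprf α 𝒜 A → Hprf α 𝒜 (Formula.box x A)

/-- `B₁ ∧ ⋯ ∧ Bₙ` (left-nested). -/
def conjList {C : Type} : Formula C → List (Formula C) → Formula C
  | A, [] => A
  | A, B :: L => conjList (A.and B) L

/-- `𝒮 ⊢_𝒜 A`: either `A ∈ IK_m(Σ,𝒜)` or `B₁∧⋯∧Bₙ ⊃ A ∈ IK_m(Σ,𝒜)` for some
`B₁,…,Bₙ ∈ 𝒮`. -/
def HderivFrom (α : Alphabet) (𝒜 : Set (Ax α.Char)) (S : Set (Formula α.Char))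
    (A : Formula α.Char) : Prop :=
  Hprf α 𝒜 A ∨ ∃ B L, B ∈ S ∧ (∀ D ∈ L, D ∈ S) ∧ Hprf α 𝒜 ((conjList B L).imp A)

/-! ### Labeled sequents -/

/-- A relational atom `w R_x u`. -/
abbrev Rel (C : Type) := ℕ × C × ℕ
/-- A labeled formula `w : A`. -/
abbrev LF (C : Type) := ℕ × Formula C

def relLabels {C : Type} (R : Multiset (Rel C)) : Set ℕ :=
  {l | ∃ a ∈ R, a.1 = l ∨ a.2.2 = l}

def lfLabels {C : Type} (Γ : Multiset (LF C)) : Set ℕ :=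
  {l | ∃ b ∈ Γ, b.1 = l}

/-- `u` is fresh with respect to the sequent `R, Γ ⊢ v : ⋯`. -/
def freshIn {C : Type} (u : ℕ) (R : Multiset (Rel C)) (Γ : Multiset (LF C)) (v : ℕ) : Prop :=
  u ∉ relLabels R ∧ u ∉ lfLabels Γ ∧ u ≠ v

/-- `Chain s w u m`: the multiset `m` is a chain of relational atoms `w R_s u`
along the string `s` (with `w = u` and `m = 0` when `s = ε`). -/
inductive Chain {C : Type} : List C → ℕ → ℕ → Multiset (Rel C) → Prop
  | nil (w : ℕ) : Chain [] w w 0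
  | cons {x : C} {s : List C} {w v u : ℕ} {m : Multiset (Rel C)} :
      Chain s v u m → Chain (x :: s) w u ((w, x, v) ::ₘ m)

/-- The labeled calculus `L_Σ(𝒜)`, height-indexed: `LD α 𝒜 n R Γ w A` states
that the labeled sequent `R, Γ ⊢ w : A` has a proof of height at most `n`. -/
inductive LD (α : Alphabet) (𝒜 : Set (Ax α.Char)) :
    ℕ → Multiset (Rel α.Char) → Multiset (LF α.Char) → ℕ → Formula α.Char → Prop
  | id (n : ℕ) (R : Multiset (Rel α.Char)) (Γ : Multiset (LF α.Char)) (w p : ℕ) : LD α 𝒜 n R ((w, Formula.atom p) ::ₘ Γ) w (Formula.atom p)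
  | botL (n : ℕ) (R : Multiset (Rel α.Char)) (Γ : Multiset (LF α.Char)) (w u : ℕ) (A : Formula α.Char) : LD α 𝒜 n R ((w, Formula.bot) ::ₘ Γ) u A
  | orL {n : ℕ} {R : Multiset (Rel α.Char)} {Γ : Multiset (LF α.Char)} {w u : ℕ} {A B C : Formula α.Char} :
      LD α 𝒜 n R ((w, A) ::ₘ Γ) u C → LD α 𝒜 n R ((w, B) ::ₘ Γ) u C →
      LD α 𝒜 (n + 1) R ((w, A.or B) ::ₘ Γ) u C
  | orR1 {n : ℕ} {R : Multiset (Rel α.Char)} {Γ : Multiset (LF α.Char)} {w : ℕ} {A B : Formula α.Char} : LD α 𝒜 n R Γ w A → LD α 𝒜 (n + 1) R Γ w (A.or B)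
  | orR2 {n : ℕ} {R : Multiset (Rel α.Char)} {Γ : Multiset (LF α.Char)} {w : ℕ} {A B : Formula α.Char} : LD α 𝒜 n R Γ w B → LD α 𝒜 (n + 1) R Γ w (A.or B)
  | andL {n : ℕ} {R : Multiset (Rel α.Char)} {Γ : Multiset (LF α.Char)} {w u : ℕ} {A B C : Formula α.Char} :
      LD α 𝒜 n R ((w, A) ::ₘ (w, B) ::ₘ Γ) u C →
      LD α 𝒜 (n + 1) R ((w, A.and B) ::ₘ Γ) u C
  | andR {n : ℕ} {R : Multiset (Rel α.Char)} {Γ : Multiset (LF α.Char)} {w : ℕ} {A B : Formula α.Char} :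
      LD α 𝒜 n R Γ w A → LD α 𝒜 n R Γ w B → LD α 𝒜 (n + 1) R Γ w (A.and B)
  | impL {n : ℕ} {R : Multiset (Rel α.Char)} {Γ : Multiset (LF α.Char)} {w u : ℕ} {A B C : Formula α.Char} :
      LD α 𝒜 n R ((w, A.imp B) ::ₘ Γ) w A → LD α 𝒜 n R ((w, B) ::ₘ Γ) u C →
      LD α 𝒜 (n + 1) R ((w, A.imp B) ::ₘ Γ) u C
  | impR {n : ℕ} {R : Multiset (Rel α.Char)} {Γ : Multiset (LF α.Char)} {w : ℕ} {A B : Formula α.Char} :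
      LD α 𝒜 n R ((w, A) ::ₘ Γ) w B → LD α 𝒜 (n + 1) R Γ w (A.imp B)
  | diaL {n : ℕ} {R : Multiset (Rel α.Char)} {Γ : Multiset (LF α.Char)} {w u v : ℕ} {x : α.Char} {A B : Formula α.Char} (hf : freshIn u R ((w, Formula.dia x A) ::ₘ Γ) v) :
      LD α 𝒜 n ((w, x, u) ::ₘ R) ((u, A) ::ₘ Γ) v B →
      LD α 𝒜 (n + 1) R ((w, Formula.dia x A) ::ₘ Γ) v B
  | diaR {n : ℕ} {R : Multiset (Rel α.Char)} {Γ : Multiset (LF α.Char)} {w u : ℕ} {x : α.Char} {A : Formula α.Char} :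
      LD α 𝒜 n ((w, x, u) ::ₘ R) Γ u A →
      LD α 𝒜 (n + 1) ((w, x, u) ::ₘ R) Γ w (Formula.dia x A)
  | boxR {n : ℕ} {R : Multiset (Rel α.Char)} {Γ : Multiset (LF α.Char)} {w u : ℕ} {x : α.Char} {A : Formula α.Char} (hf : freshIn u R Γ w) :
      LD α 𝒜 n ((w, x, u) ::ₘ R) Γ u A → LD α 𝒜 (n + 1) R Γ w (Formula.box x A)
  | boxL {n : ℕ} {R : Multiset (Rel α.Char)} {Γ : Multiset (LF α.Char)} {w u v : ℕ} {x : α.Char} {A C : Formula α.Char} :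
      LD α 𝒜 n ((w, x, u) ::ₘ R) ((w, Formula.box x A) ::ₘ (u, A) ::ₘ Γ) v C →
      LD α 𝒜 (n + 1) ((w, x, u) ::ₘ R) ((w, Formula.box x A) ::ₘ Γ) v C
  | dx {n : ℕ} {R : Multiset (Rel α.Char)} {Γ : Multiset (LF α.Char)} {u v : ℕ} {x : α.Char} {A : Formula α.Char} (w : ℕ) (hax : Ax.ser x ∈ 𝒜) (hf : freshIn u R Γ v) :
      LD α 𝒜 n ((w, x, u) ::ₘ R) Γ v A → LD α 𝒜 (n + 1) R Γ v A
  | isx {n : ℕ} {R : Multiset (Rel α.Char)} {Γ : Multiset (LF α.Char)} {w u v : ℕ} {s : List α.Char} {x : α.Char} {m : Multiset (Rel α.Char)} {A : Formula α.Char} (hax : Ax.ipa x s ∈ 𝒜) (hc : Chain s w u m) :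
      LD α 𝒜 n ((w, x, u) ::ₘ (m + R)) Γ v A → LD α 𝒜 (n + 1) (m + R) Γ v A
  | cx {n : ℕ} {R : Multiset (Rel α.Char)} {Γ : Multiset (LF α.Char)} {w u v : ℕ} {x : α.Char} {A : Formula α.Char} :
      LD α 𝒜 n ((w, x, u) ::ₘ (u, α.conv x, w) ::ₘ R) Γ v A →
      LD α 𝒜 (n + 1) ((w, x, u) ::ₘ R) Γ v A

/-- Derivability in `L_Σ(𝒜)`. -/
def LDeriv (α : Alphabet) (𝒜 : Set (Ax α.Char)) (R : Multiset (Rel α.Char))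
    (Γ : Multiset (LF α.Char)) (w : ℕ) (A : Formula α.Char) : Prop :=
  ∃ n, LD α 𝒜 n R Γ w A

/-- (Σ,𝒜)-validity of a labeled sequent. -/
def SeqValid (α : Alphabet) (𝒜 : Set (Ax α.Char)) (R : Multiset (Rel α.Char))
    (Γ : Multiset (LF α.Char)) (w : ℕ) (A : Formula α.Char) : Prop :=
  ∀ (M : BiModel α), AModel 𝒜 M → ∀ I : ℕ → M.W,
    (∀ a ∈ R, M.R a.2.1 (I a.1) (I a.2.2)) → (∀ b ∈ Γ, Sat M (I b.1) b.2) →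
      Sat M (I w) A

/-! ### Grammars and propagation -/

/-- Converse of a string: `s̄ = x̄ₙ⋯x̄₁` for `s = x₁⋯xₙ`. -/
def convStr {C : Type} (cv : C → C) (s : List C) : List C := (s.map cv).reverse

/-- The 𝒜-grammar `g(𝒜)`. -/
def Gram (α : Alphabet) (𝒜 : Set (Ax α.Char)) : Set (α.Char × List α.Char) :=
  {p | Ax.ipa p.1 p.2 ∈ 𝒜 ∨
        ∃ x s, Ax.ipa x s ∈ 𝒜 ∧ p.1 = α.conv x ∧ p.2 = convStr α.conv s}

/-- One-step derivation between strings in a grammar. -/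
def Step {C : Type} (g : Set (C × List C)) (s t : List C) : Prop :=
  ∃ s₁ s₂ x r, (x, r) ∈ g ∧ s = s₁ ++ x :: s₂ ∧ t = s₁ ++ r ++ s₂

/-- The language of the character `x` relative to a grammar. -/
def Lang {C : Type} (g : Set (C × List C)) (x : C) : Set (List C) :=
  {t | Relation.ReflTransGen (Step g) [x] t}

/-- An edge of the propagation graph `PG(R)`. -/
def PGEdge (α : Alphabet) (R : Multiset (Rel α.Char)) (a : ℕ) (x : α.Char) (b : ℕ) : Prop :=
  (a, x, b) ∈ R ∨ (b, α.conv x, a) ∈ R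

/-- `PPath α R w u s`: there is a propagation path from `w` to `u` in `PG(R)`
whose string is `s`. -/
inductive PPath (α : Alphabet) (R : Multiset (Rel α.Char)) : ℕ → ℕ → List α.Char → Prop
  | nil (w : ℕ) : PPath α R w w []
  | cons {w v u : ℕ} {x : α.Char} {s : List α.Char} :
      PGEdge α R w x v → PPath α R v u s → PPath α R w u (x :: s)

/-- Side condition of the propagation rules: there exists a propagation path
`π(w,u)` in `PG(R)` with `s_π(w,u) ∈ L_{g(𝒜)}(x)`. -/
def CanProp (α : Alphabet) (𝒜 : Set (Ax α.Char)) (R : Multiset (Rel α.Char))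
    (w u : ℕ) (x : α.Char) : Prop :=
  ∃ s, PPath α R w u s ∧ s ∈ Lang (Gram α 𝒜) x

/-- The refined labeled calculus `L*_Σ(𝒜)`, height-indexed. -/
inductive LDs (α : Alphabet) (𝒜 : Set (Ax α.Char)) :
    ℕ → Multiset (Rel α.Char) → Multiset (LF α.Char) → ℕ → Formula α.Char → Prop
  | id (n : ℕ) (R : Multiset (Rel α.Char)) (Γ : Multiset (LF α.Char)) (w p : ℕ) : LDs α 𝒜 n R ((w, Formula.atom p) ::ₘ Γ) w (Formula.atom p)
  | botL (n : ℕ) (R : Multiset (Rel α.Char)) (Γ : Multiset (LF α.Char)) (w u : ℕ) (A : Formula α.Char) : LDs α 𝒜 n R ((w, Formula.bot) ::ₘ Γ) u A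
  | orL {n : ℕ} {R : Multiset (Rel α.Char)} {Γ : Multiset (LF α.Char)} {w u : ℕ} {A B C : Formula α.Char} :
      LDs α 𝒜 n R ((w, A) ::ₘ Γ) u C → LDs α 𝒜 n R ((w, B) ::ₘ Γ) u C →
      LDs α 𝒜 (n + 1) R ((w, A.or B) ::ₘ Γ) u C
  | orR1 {n : ℕ} {R : Multiset (Rel α.Char)} {Γ : Multiset (LF α.Char)} {w : ℕ} {A B : Formula α.Char} : LDs α 𝒜 n R Γ w A → LDs α 𝒜 (n + 1) R Γ w (A.or B)
  | orR2 {n : ℕ} {R : Multiset (Rel α.Char)} {Γ : Multiset (LF α.Char)} {w : ℕ} {A B : Formula α.Char} : LDs α 𝒜 n R Γ w B → LDs α 𝒜 (n + 1) R Γ w (A.or B)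
  | andL {n : ℕ} {R : Multiset (Rel α.Char)} {Γ : Multiset (LF α.Char)} {w u : ℕ} {A B C : Formula α.Char} :
      LDs α 𝒜 n R ((w, A) ::ₘ (w, B) ::ₘ Γ) u C →
      LDs α 𝒜 (n + 1) R ((w, A.and B) ::ₘ Γ) u C
  | andR {n : ℕ} {R : Multiset (Rel α.Char)} {Γ : Multiset (LF α.Char)} {w : ℕ} {A B : Formula α.Char} :
      LDs α 𝒜 n R Γ w A → LDs α 𝒜 n R Γ w B → LDs α 𝒜 (n + 1) R Γ w (A.and B)
  | impL {n : ℕ} {R : Multiset (Rel α.Char)} {Γ : Multiset (LF α.Char)} {w u : ℕ} {A B C : Formula α.Char} :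
      LDs α 𝒜 n R ((w, A.imp B) ::ₘ Γ) w A → LDs α 𝒜 n R ((w, B) ::ₘ Γ) u C →
      LDs α 𝒜 (n + 1) R ((w, A.imp B) ::ₘ Γ) u C
  | impR {n : ℕ} {R : Multiset (Rel α.Char)} {Γ : Multiset (LF α.Char)} {w : ℕ} {A B : Formula α.Char} :
      LDs α 𝒜 n R ((w, A) ::ₘ Γ) w B → LDs α 𝒜 (n + 1) R Γ w (A.imp B)
  | diaL {n : ℕ} {R : Multiset (Rel α.Char)} {Γ : Multiset (LF α.Char)} {w u v : ℕ} {x : α.Char} {A B : Formula α.Char} (hf : freshIn u R ((w, Formula.dia x A) ::ₘ Γ) v) :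
      LDs α 𝒜 n ((w, x, u) ::ₘ R) ((u, A) ::ₘ Γ) v B →
      LDs α 𝒜 (n + 1) R ((w, Formula.dia x A) ::ₘ Γ) v B
  | boxR {n : ℕ} {R : Multiset (Rel α.Char)} {Γ : Multiset (LF α.Char)} {w u : ℕ} {x : α.Char} {A : Formula α.Char} (hf : freshIn u R Γ w) :
      LDs α 𝒜 n ((w, x, u) ::ₘ R) Γ u A → LDs α 𝒜 (n + 1) R Γ w (Formula.box x A)
  | dx {n : ℕ} {R : Multiset (Rel α.Char)} {Γ : Multiset (LF α.Char)} {u v : ℕ} {x : α.Char} {A : Formula α.Char} (w : ℕ) (hax : Ax.ser x ∈ 𝒜) (hf : freshIn u R Γ v) :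
      LDs α 𝒜 n ((w, x, u) ::ₘ R) Γ v A → LDs α 𝒜 (n + 1) R Γ v A
  | pdia {n : ℕ} {R : Multiset (Rel α.Char)} {Γ : Multiset (LF α.Char)} {u : ℕ} {x : α.Char} {A : Formula α.Char} (w : ℕ) (h : CanProp α 𝒜 R w u x) :
      LDs α 𝒜 n R Γ u A → LDs α 𝒜 (n + 1) R Γ w (Formula.dia x A)
  | pbox {n : ℕ} {R : Multiset (Rel α.Char)} {Γ : Multiset (LF α.Char)} {w u v : ℕ} {x : α.Char} {A B : Formula α.Char} (h : CanProp α 𝒜 R w u x) :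
      LDs α 𝒜 n R ((w, Formula.box x A) ::ₘ (u, A) ::ₘ Γ) v B →
      LDs α 𝒜 (n + 1) R ((w, Formula.box x A) ::ₘ Γ) v B

/-- Derivability in `L*_Σ(𝒜)`. -/
def LDerivS (α : Alphabet) (𝒜 : Set (Ax α.Char)) (R : Multiset (Rel α.Char))
    (Γ : Multiset (LF α.Char)) (w : ℕ) (A : Formula α.Char) : Prop :=
  ∃ n, LDs α 𝒜 n R Γ w A

/-! ### Label substitutions -/

/-- `subL v u l`: replace the label `v` by `u`. -/
def subL (v u l : ℕ) : ℕ := if l = v then u else l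

def subR {C : Type} (v u : ℕ) (R : Multiset (Rel C)) : Multiset (Rel C) :=
  R.map (fun a => (subL v u a.1, a.2.1, subL v u a.2.2))

def subG {C : Type} (v u : ℕ) (Γ : Multiset (LF C)) : Multiset (LF C) :=
  Γ.map (fun b => (subL v u b.1, b.2))

/-! ### Double-negation translations -/

/-- The double-negation translation on `L_Σ`. -/
def dnt {C : Type} : Formula C → Formula C
  | Formula.atom p => ((Formula.atom p).neg).neg
  | Formula.bot => ((Formula.bot : Formula C).neg).neg
  | Formula.or A B => (((dnt A).neg).and ((dnt B).neg)).neg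
  | Formula.and A B => (dnt A).and (dnt B)
  | Formula.imp A B => (dnt A).imp (dnt B)
  | Formula.dia x A => (Formula.box x ((dnt A).neg)).neg
  | Formula.box x A => Formula.box x (dnt A)

/-! ### The classical language and calculi -/

/-- Formulae of the classical language `L^C_Σ` (negation normal form). -/
inductive CForm (C : Type) : Type
  | pos : ℕ → CForm C
  | neg : ℕ → CForm C
  | or  : CForm C → CForm C → CForm C
  | and : CForm C → CForm C → CForm C
  | dia : C → CForm C → CForm C
  | box : C → CForm C → CForm C

/-- Classical negation, recursively extended to all formulae of `L^C_Σ`. -/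
def cneg {C : Type} : CForm C → CForm C
  | CForm.pos p => CForm.neg p
  | CForm.neg p => CForm.pos p
  | CForm.or A B => CForm.and (cneg A) (cneg B)
  | CForm.and A B => CForm.or (cneg A) (cneg B)
  | CForm.dia x A => CForm.box x (cneg A)
  | CForm.box x A => CForm.dia x (cneg A)

/-- `⊥ := p ∧ ¬p` for a fixed propositional atom. -/
def cbot {C : Type} : CForm C := CForm.and (CForm.pos 0) (CForm.neg 0)

/-- `A ⊃ B := ¬A ∨ B`. -/
def cimp {C : Type} (A B : CForm C) : CForm C := CForm.or (cneg A) B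

/-- Reading a formula of `L_Σ` as a formula of `L^C_Σ`. -/
def toC {C : Type} : Formula C → CForm C
  | Formula.atom p => CForm.pos p
  | Formula.bot => cbot
  | Formula.or A B => CForm.or (toC A) (toC B)
  | Formula.and A B => CForm.and (toC A) (toC B)
  | Formula.imp A B => cimp (toC A) (toC B)
  | Formula.dia x A => CForm.dia x (toC A)
  | Formula.box x A => CForm.box x (toC A)

/-- A classical labeled formula. -/
abbrev CLF (C : Type) := ℕ × CForm C

def clfLabels {C : Type} (Γ : Multiset (CLF C)) : Set ℕ :=
  {l | ∃ b ∈ Γ, b.1 = l}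

/-- The refined labeled calculus `L^C_Σ(𝒜)` for the corresponding classical
grammar logic, operating on one-sided sequents `R ⊢ Γ`. -/
inductive CLD (α : Alphabet) (𝒜 : Set (Ax α.Char)) :
    Multiset (Rel α.Char) → Multiset (CLF α.Char) → Prop
  | id (R : Multiset (Rel α.Char)) (Γ : Multiset (CLF α.Char)) (w p : ℕ) :
      CLD α 𝒜 R ((w, CForm.pos p) ::ₘ (w, CForm.neg p) ::ₘ Γ)
  | orR {R : Multiset (Rel α.Char)} {Γ : Multiset (CLF α.Char)} {w : ℕ}
      {A B : CForm α.Char} :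
      CLD α 𝒜 R ((w, A) ::ₘ (w, B) ::ₘ Γ) → CLD α 𝒜 R ((w, CForm.or A B) ::ₘ Γ)
  | andR {R : Multiset (Rel α.Char)} {Γ : Multiset (CLF α.Char)} {w : ℕ}
      {A B : CForm α.Char} :
      CLD α 𝒜 R ((w, A) ::ₘ Γ) → CLD α 𝒜 R ((w, B) ::ₘ Γ) →
      CLD α 𝒜 R ((w, CForm.and A B) ::ₘ Γ)
  | boxR {R : Multiset (Rel α.Char)} {Γ : Multiset (CLF α.Char)} {w u : ℕ}
      {x : α.Char} {A : CForm α.Char}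
      (hf : u ∉ relLabels R ∧ u ∉ clfLabels ((w, CForm.box x A) ::ₘ Γ)) :
      CLD α 𝒜 ((w, x, u) ::ₘ R) ((u, A) ::ₘ Γ) →
      CLD α 𝒜 R ((w, CForm.box x A) ::ₘ Γ)
  | dx {R : Multiset (Rel α.Char)} {Γ : Multiset (CLF α.Char)} {u : ℕ}
      {x : α.Char} (w : ℕ) (hax : Ax.ser x ∈ 𝒜)
      (hf : u ∉ relLabels R ∧ u ∉ clfLabels Γ) :
      CLD α 𝒜 ((w, x, u) ::ₘ R) Γ → CLD α 𝒜 R Γ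
  | diaR {R : Multiset (Rel α.Char)} {Γ : Multiset (CLF α.Char)} {w u : ℕ}
      {x : α.Char} {A : CForm α.Char} (h : CanProp α 𝒜 R w u x) :
      CLD α 𝒜 R ((w, CForm.dia x A) ::ₘ (u, A) ::ₘ Γ) →
      CLD α 𝒜 R ((w, CForm.dia x A) ::ₘ Γ)

/-- `⟨x₁⟩⋯⟨xₙ⟩A` in the classical language. -/
def cdias {C : Type} : List C → CForm C → CForm C
  | [], A => A
  | x :: s, A => CForm.dia x (cdias s A)

/-- The Hilbert system for the classical grammar logic `K_m(Σ,𝒜')` corresponding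
to `IK_m(Σ,𝒜)`: seriality axioms of `𝒜` are kept and each intuitionistic path
axiom contributes the path axiom `⟨x₁⟩⋯⟨xₙ⟩A ⊃ ⟨x⟩A`. -/
inductive Kprf (α : Alphabet) (𝒜 : Set (Ax α.Char)) : CForm α.Char → Prop
  | cpl1 (A B : CForm α.Char) : Kprf α 𝒜 (cimp A (cimp B A))
  | cpl2 (A B C : CForm α.Char) :
      Kprf α 𝒜 (cimp (cimp A (cimp B C)) (cimp (cimp A B) (cimp A C)))
  | cpl3 (A B : CForm α.Char) : Kprf α 𝒜 (cimp A (CForm.or A B))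
  | cpl4 (A B : CForm α.Char) : Kprf α 𝒜 (cimp B (CForm.or A B))
  | cpl5 (A B C : CForm α.Char) :
      Kprf α 𝒜 (cimp (cimp A C) (cimp (cimp B C) (cimp (CForm.or A B) C)))
  | cpl6 (A B : CForm α.Char) : Kprf α 𝒜 (cimp (CForm.and A B) A)
  | cpl7 (A B : CForm α.Char) : Kprf α 𝒜 (cimp (CForm.and A B) B)
  | cpl8 (A B : CForm α.Char) : Kprf α 𝒜 (cimp A (cimp B (CForm.and A B)))
  | cpl9 (A : CForm α.Char) : Kprf α 𝒜 (cimp cbot A)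
  | cpl10 (A : CForm α.Char) : Kprf α 𝒜 (CForm.or A (cneg A))
  | axK (x : α.Char) (A B : CForm α.Char) :
      Kprf α 𝒜 (cimp (CForm.box x (cimp A B)) (cimp (CForm.box x A) (CForm.box x B)))
  | axConv (x : α.Char) (A : CForm α.Char) :
      Kprf α 𝒜 (cimp A (CForm.box x (CForm.dia (α.conv x) A)))
  | axSer (x : α.Char) (A : CForm α.Char) (h : Ax.ser x ∈ 𝒜) :
      Kprf α 𝒜 (cimp (CForm.box x A) (CForm.dia x A))
  | axPath (x : α.Char) (s : List α.Char) (A : CForm α.Char) (h : Ax.ipa x s ∈ 𝒜) :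
      Kprf α 𝒜 (cimp (cdias s A) (CForm.dia x A))
  | mp (A B : CForm α.Char) : Kprf α 𝒜 (cimp A B) → Kprf α 𝒜 A → Kprf α 𝒜 B
  | nec (x : α.Char) (A : CForm α.Char) : Kprf α 𝒜 A → Kprf α 𝒜 (CForm.box x A)

/-- The double-negation translation from `L^C_Σ` into `L_Σ`. -/
def dntC {C : Type} : CForm C → Formula C
  | CForm.pos p => ((Formula.atom p).neg).neg
  | CForm.neg p => (((Formula.atom p).neg).neg).neg
  | CForm.or A B => (((dntC A).neg).and ((dntC B).neg)).neg
  | CForm.and A B => (dntC A).and (dntC B)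
  | CForm.dia x A => (Formula.box x ((dntC A).neg)).neg
  | CForm.box x A => Formula.box x (dntC A)

/-! ### Labeled tree sequents and derivation trees -/

/-- Reachability along the relational atoms of `R`. -/
def Reach {C : Type} (R : Multiset (Rel C)) (a b : ℕ) : Prop :=
  Relation.ReflTransGen (fun p q => ∃ x, (p, x, q) ∈ R) a b

/-- `R, Γ ⊢ w : ⋯` is a labeled tree sequent with root `r`. -/
def isTreeSeqRoot (α : Alphabet) (R : Multiset (Rel α.Char))
    (Γ : Multiset (LF α.Char)) (w r : ℕ) : Prop :=
  (R = 0 → r = w ∧ ∀ b ∈ Γ, b.1 = w) ∧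
  (R ≠ 0 →
    (∀ a ∈ R, a.2.2 ≠ r) ∧
    (∀ l : ℕ, l ≠ r → (R.filter (fun a => a.2.2 = l)).card ≤ 1) ∧
    (∀ l ∈ relLabels R, Reach R r l) ∧
    (∀ b ∈ Γ, b.1 ∈ relLabels R) ∧ w ∈ relLabels R)

/-- Proof trees (derivations) in the refined labeled calculus `L*_Σ(𝒜)`. -/
inductive DTree (α : Alphabet) (𝒜 : Set (Ax α.Char)) :
    Multiset (Rel α.Char) → Multiset (LF α.Char) → ℕ → Formula α.Char → Type
  | id (R : Multiset (Rel α.Char)) (Γ : Multiset (LF α.Char)) (w p : ℕ) :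
      DTree α 𝒜 R ((w, Formula.atom p) ::ₘ Γ) w (Formula.atom p)
  | botL (R : Multiset (Rel α.Char)) (Γ : Multiset (LF α.Char)) (w u : ℕ)
      (A : Formula α.Char) : DTree α 𝒜 R ((w, Formula.bot) ::ₘ Γ) u A
  | orL (R : Multiset (Rel α.Char)) (Γ : Multiset (LF α.Char)) (w u : ℕ)
      (A B C : Formula α.Char) :
      DTree α 𝒜 R ((w, A) ::ₘ Γ) u C → DTree α 𝒜 R ((w, B) ::ₘ Γ) u C →
      DTree α 𝒜 R ((w, A.or B) ::ₘ Γ) u C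
  | orR1 (R : Multiset (Rel α.Char)) (Γ : Multiset (LF α.Char)) (w : ℕ)
      (A B : Formula α.Char) : DTree α 𝒜 R Γ w A → DTree α 𝒜 R Γ w (A.or B)
  | orR2 (R : Multiset (Rel α.Char)) (Γ : Multiset (LF α.Char)) (w : ℕ)
      (A B : Formula α.Char) : DTree α 𝒜 R Γ w B → DTree α 𝒜 R Γ w (A.or B)
  | andL (R : Multiset (Rel α.Char)) (Γ : Multiset (LF α.Char)) (w u : ℕ)
      (A B C : Formula α.Char) :
      DTree α 𝒜 R ((w, A) ::ₘ (w, B) ::ₘ Γ) u C →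
      DTree α 𝒜 R ((w, A.and B) ::ₘ Γ) u C
  | andR (R : Multiset (Rel α.Char)) (Γ : Multiset (LF α.Char)) (w : ℕ)
      (A B : Formula α.Char) :
      DTree α 𝒜 R Γ w A → DTree α 𝒜 R Γ w B → DTree α 𝒜 R Γ w (A.and B)
  | impL (R : Multiset (Rel α.Char)) (Γ : Multiset (LF α.Char)) (w u : ℕ)
      (A B C : Formula α.Char) :
      DTree α 𝒜 R ((w, A.imp B) ::ₘ Γ) w A → DTree α 𝒜 R ((w, B) ::ₘ Γ) u C →
      DTree α 𝒜 R ((w, A.imp B) ::ₘ Γ) u C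
  | impR (R : Multiset (Rel α.Char)) (Γ : Multiset (LF α.Char)) (w : ℕ)
      (A B : Formula α.Char) :
      DTree α 𝒜 R ((w, A) ::ₘ Γ) w B → DTree α 𝒜 R Γ w (A.imp B)
  | diaL (R : Multiset (Rel α.Char)) (Γ : Multiset (LF α.Char)) (w u v : ℕ)
      (x : α.Char) (A B : Formula α.Char)
      (hf : freshIn u R ((w, Formula.dia x A) ::ₘ Γ) v) :
      DTree α 𝒜 ((w, x, u) ::ₘ R) ((u, A) ::ₘ Γ) v B →
      DTree α 𝒜 R ((w, Formula.dia x A) ::ₘ Γ) v B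
  | boxR (R : Multiset (Rel α.Char)) (Γ : Multiset (LF α.Char)) (w u : ℕ)
      (x : α.Char) (A : Formula α.Char) (hf : freshIn u R Γ w) :
      DTree α 𝒜 ((w, x, u) ::ₘ R) Γ u A → DTree α 𝒜 R Γ w (Formula.box x A)
  | dx (R : Multiset (Rel α.Char)) (Γ : Multiset (LF α.Char)) (w u v : ℕ)
      (x : α.Char) (A : Formula α.Char) (hax : Ax.ser x ∈ 𝒜)
      (hf : freshIn u R Γ v) :
      DTree α 𝒜 ((w, x, u) ::ₘ R) Γ v A → DTree α 𝒜 R Γ v A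
  | pdia (R : Multiset (Rel α.Char)) (Γ : Multiset (LF α.Char)) (w u : ℕ)
      (x : α.Char) (A : Formula α.Char) (h : CanProp α 𝒜 R w u x) :
      DTree α 𝒜 R Γ u A → DTree α 𝒜 R Γ w (Formula.dia x A)
  | pbox (R : Multiset (Rel α.Char)) (Γ : Multiset (LF α.Char)) (w u v : ℕ)
      (x : α.Char) (A B : Formula α.Char) (h : CanProp α 𝒜 R w u x) :
      DTree α 𝒜 R ((w, Formula.box x A) ::ₘ (u, A) ::ₘ Γ) v B →
      DTree α 𝒜 R ((w, Formula.box x A) ::ₘ Γ) v B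

/-- `EverySeq P d`: every labeled sequent occurring in the derivation `d`
satisfies `P`. -/
def EverySeq {α : Alphabet} {𝒜 : Set (Ax α.Char)}
    (P : Multiset (Rel α.Char) → Multiset (LF α.Char) → ℕ → Formula α.Char → Prop) :
    ∀ {R : Multiset (Rel α.Char)} {Γ : Multiset (LF α.Char)} {w : ℕ}
      {A : Formula α.Char}, DTree α 𝒜 R Γ w A → Prop
  | _, _, _, _, DTree.id R Γ w p => P R ((w, Formula.atom p) ::ₘ Γ) w (Formula.atom p)
  | _, _, _, _, DTree.botL R Γ w u A => P R ((w, Formula.bot) ::ₘ Γ) u A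
  | _, _, _, _, DTree.orL R Γ w u A B C d1 d2 =>
      P R ((w, A.or B) ::ₘ Γ) u C ∧ EverySeq P d1 ∧ EverySeq P d2
  | _, _, _, _, DTree.orR1 R Γ w A B d => P R Γ w (A.or B) ∧ EverySeq P d
  | _, _, _, _, DTree.orR2 R Γ w A B d => P R Γ w (A.or B) ∧ EverySeq P d
  | _, _, _, _, DTree.andL R Γ w u A B C d =>
      P R ((w, A.and B) ::ₘ Γ) u C ∧ EverySeq P d
  | _, _, _, _, DTree.andR R Γ w A B d1 d2 =>
      P R Γ w (A.and B) ∧ EverySeq P d1 ∧ EverySeq P d2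
  | _, _, _, _, DTree.impL R Γ w u A B C d1 d2 =>
      P R ((w, A.imp B) ::ₘ Γ) u C ∧ EverySeq P d1 ∧ EverySeq P d2
  | _, _, _, _, DTree.impR R Γ w A B d => P R Γ w (A.imp B) ∧ EverySeq P d
  | _, _, _, _, DTree.diaL R Γ w u v x A B _ d =>
      P R ((w, Formula.dia x A) ::ₘ Γ) v B ∧ EverySeq P d
  | _, _, _, _, DTree.boxR R Γ w u x A _ d =>
      P R Γ w (Formula.box x A) ∧ EverySeq P d
  | _, _, _, _, DTree.dx R Γ w u v x A _ _ d => P R Γ v A ∧ EverySeq P d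
  | _, _, _, _, DTree.pdia R Γ w u x A _ d =>
      P R Γ w (Formula.dia x A) ∧ EverySeq P d
  | _, _, _, _, DTree.pbox R Γ w u v x A B _ d =>
      P R ((w, Formula.box x A) ::ₘ Γ) v B ∧ EverySeq P d

/-! ### Auxiliary development: Hilbert-system toolkit -/

/-- Provability from a set of hypotheses. -/
inductive Prov (α : Alphabet) (𝒜 : Set (Ax α.Char)) (Γ : Set (Formula α.Char)) :
    Formula α.Char → Prop
  | ax {A} : Hprf α 𝒜 A → Prov α 𝒜 Γ A
  | hyp {A} : A ∈ Γ → Prov α 𝒜 Γ A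
  | mp {A B} : Prov α 𝒜 Γ (A.imp B) → Prov α 𝒜 Γ A → Prov α 𝒜 Γ B

section Toolkit

variable {α : Alphabet} {𝒜 : Set (Ax α.Char)} {Γ : Set (Formula α.Char)}
variable {A B C D : Formula α.Char}

theorem Hprf.imp_self (A : Formula α.Char) : Hprf α 𝒜 (A.imp A) :=
  Hprf.mp _ _ (Hprf.mp _ _ (Hprf.ipl2 A (A.imp A) A) (Hprf.ipl1 A (A.imp A)))
    (Hprf.ipl1 A A)

theorem Prov.mono {Γ' : Set (Formula α.Char)} (hs : Γ ⊆ Γ')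
    (h : Prov α 𝒜 Γ A) : Prov α 𝒜 Γ' A := by
  induction h with
  | ax h => exact Prov.ax h
  | hyp h => exact Prov.hyp (hs h)
  | mp _ _ ih1 ih2 => exact Prov.mp ih1 ih2

theorem Prov.deduction (h : Prov α 𝒜 (insert A Γ) B) : Prov α 𝒜 Γ (A.imp B) := by
  induction h with
  | ax h => exact Prov.mp (Prov.ax (Hprf.ipl1 _ _)) (Prov.ax h)
  | hyp h =>
    rcases h with h | h
    · subst h; exact Prov.ax (Hprf.imp_self _)
    · exact Prov.mp (Prov.ax (Hprf.ipl1 _ _)) (Prov.hyp h)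
  | mp _ _ ih1 ih2 => exact Prov.mp (Prov.mp (Prov.ax (Hprf.ipl2 _ _ _)) ih1) ih2

theorem Prov.toHprf (h : Prov α 𝒜 ∅ A) : Hprf α 𝒜 A := by
  induction h with
  | ax h => exact h
  | hyp h => exact absurd h (Set.notMem_empty _)
  | mp _ _ ih1 ih2 => exact Hprf.mp _ _ ih1 ih2

theorem Prov.and_intro (h1 : Prov α 𝒜 Γ A) (h2 : Prov α 𝒜 Γ B) :
    Prov α 𝒜 Γ (A.and B) := Prov.mp (Prov.mp (Prov.ax (Hprf.ipl8 _ _)) h1) h2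

theorem Prov.and_left (h : Prov α 𝒜 Γ (A.and B)) : Prov α 𝒜 Γ A :=
  Prov.mp (Prov.ax (Hprf.ipl6 _ _)) h

theorem Prov.and_right (h : Prov α 𝒜 Γ (A.and B)) : Prov α 𝒜 Γ B :=
  Prov.mp (Prov.ax (Hprf.ipl7 _ _)) h

theorem Prov.or_inl (h : Prov α 𝒜 Γ A) : Prov α 𝒜 Γ (A.or B) :=
  Prov.mp (Prov.ax (Hprf.ipl3 _ _)) h

theorem Prov.or_inr (h : Prov α 𝒜 Γ B) : Prov α 𝒜 Γ (A.or B) :=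
  Prov.mp (Prov.ax (Hprf.ipl4 _ _)) h

theorem Prov.or_elim (h : Prov α 𝒜 Γ (A.or B)) (h1 : Prov α 𝒜 Γ (A.imp C))
    (h2 : Prov α 𝒜 Γ (B.imp C)) : Prov α 𝒜 Γ C :=
  Prov.mp (Prov.mp (Prov.mp (Prov.ax (Hprf.ipl5 _ _ _)) h1) h2) h

theorem Prov.exfalso (h : Prov α 𝒜 Γ Formula.bot) : Prov α 𝒜 Γ A :=
  Prov.mp (Prov.ax (Hprf.ipl9 _)) h

theorem Prov.cut (h1 : Prov α 𝒜 Γ A) (h2 : Prov α 𝒜 (insert A Γ) B) :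
    Prov α 𝒜 Γ B := Prov.mp h2.deduction h1

theorem Prov.hyp0 : Prov α 𝒜 (insert A Γ) A := Prov.hyp (Set.mem_insert _ _)

theorem Prov.wk (h : Prov α 𝒜 Γ B) : Prov α 𝒜 (insert A Γ) B :=
  h.mono (Set.subset_insert _ _)

theorem Prov.imp_trans (h1 : Prov α 𝒜 Γ (A.imp B)) (h2 : Prov α 𝒜 Γ (B.imp C)) :
    Prov α 𝒜 Γ (A.imp C) :=
  Prov.deduction (Prov.mp h2.wk (Prov.mp h1.wk Prov.hyp0))

/-- Compactness of `Prov`. -/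
theorem Prov.compact (h : Prov α 𝒜 Γ A) :
    ∃ L : List (Formula α.Char), (∀ E ∈ L, E ∈ Γ) ∧
      ∀ Γ' : Set (Formula α.Char), (∀ E ∈ L, E ∈ Γ') → Prov α 𝒜 Γ' A := by
  induction h with
  | ax h => exact ⟨[], by simp, fun Γ' _ => Prov.ax h⟩
  | @hyp A h =>
    exact ⟨[A], by simpa using h, fun Γ' h' => Prov.hyp (h' A (by simp))⟩
  | mp _ _ ih1 ih2 =>
    obtain ⟨L1, hL1, h1⟩ := ih1
    obtain ⟨L2, hL2, h2⟩ := ih2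
    refine ⟨L1 ++ L2, ?_, fun Γ' h' => ?_⟩
    · intro E hE; rcases List.mem_append.mp hE with h | h
      exacts [hL1 E h, hL2 E h]
    · exact Prov.mp (h1 Γ' fun E hE => h' E (List.mem_append_left _ hE))
        (h2 Γ' fun E hE => h' E (List.mem_append_right _ hE))

theorem Prov.trans_set {Γ' : Set (Formula α.Char)} (h : Prov α 𝒜 Γ' B)
    (hall : ∀ E ∈ Γ', Prov α 𝒜 Γ E) : Prov α 𝒜 Γ B := by
  induction h with
  | ax h => exact Prov.ax h
  | hyp h => exact hall _ h
  | mp _ _ ih1 ih2 => exact Prov.mp ih1 ih2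

/-! #### Conjunctions and disjunctions of lists -/

/-- `A₁ ∧ (A₂ ∧ (⋯ ∧ ⊤))`. -/
def lConj {C : Type} : List (Formula C) → Formula C
  | [] => Formula.bot.imp Formula.bot
  | A :: L => A.and (lConj L)

/-- `A₁ ∨ (A₂ ∨ (⋯ ∨ ⊥))`. -/
def lDisj {C : Type} : List (Formula C) → Formula C
  | [] => Formula.bot
  | A :: L => A.or (lDisj L)

theorem lConj_elim {L : List (Formula α.Char)} (hE : A ∈ L)
    (h : Prov α 𝒜 Γ (lConj L)) : Prov α 𝒜 Γ A := by
  induction L with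
  | nil => simp at hE
  | cons B L ih =>
    rcases List.mem_cons.mp hE with rfl | hE
    · exact h.and_left
    · exact ih hE h.and_right

theorem lConj_intro {L : List (Formula α.Char)} (h : ∀ E ∈ L, Prov α 𝒜 Γ E) :
    Prov α 𝒜 Γ (lConj L) := by
  induction L with
  | nil => exact Prov.ax (Hprf.imp_self _)
  | cons B L ih =>
    exact Prov.and_intro (h B (by simp)) (ih fun E hE => h E (by simp [hE]))

theorem lConj_sub {L L' : List (Formula α.Char)} (hs : ∀ E ∈ L, E ∈ L') :
    Prov α 𝒜 Γ ((lConj L').imp (lConj L)) :=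
  Prov.deduction (lConj_intro fun E hE => lConj_elim (hs E hE) Prov.hyp0)

theorem lDisj_intro {L : List (Formula α.Char)} (hE : A ∈ L)
    (h : Prov α 𝒜 Γ A) : Prov α 𝒜 Γ (lDisj L) := by
  induction L with
  | nil => simp at hE
  | cons B L ih =>
    rcases List.mem_cons.mp hE with rfl | hE
    · exact h.or_inl
    · exact (ih hE).or_inr

theorem lDisj_elim' {L : List (Formula α.Char)}
    (hall : ∀ E ∈ L, Prov α 𝒜 Γ (E.imp C)) : Prov α 𝒜 Γ ((lDisj L).imp C) := by
  induction L with
  | nil => exact Prov.deduction (Prov.exfalso Prov.hyp0)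
  | cons B L ih =>
    refine Prov.deduction (Prov.or_elim Prov.hyp0 (hall B (by simp)).wk ?_)
    exact (ih fun E hE => hall E (by simp [hE])).wk

theorem lDisj_elim {L : List (Formula α.Char)} (h : Prov α 𝒜 Γ (lDisj L))
    (hall : ∀ E ∈ L, Prov α 𝒜 Γ (E.imp C)) : Prov α 𝒜 Γ C :=
  Prov.mp (lDisj_elim' hall) h

theorem lDisj_mono {L L' : List (Formula α.Char)} (hs : ∀ E ∈ L, E ∈ L') :
    Prov α 𝒜 Γ ((lDisj L).imp (lDisj L')) :=
  Prov.deduction (lDisj_elim Prov.hyp0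
    (fun E hE => Prov.deduction (lDisj_intro (hs E hE) Prov.hyp0)))

/-- Conversion of a provability from a finite list into a provable implication. -/
theorem Prov.finConj (h : Prov α 𝒜 Γ A) :
    ∃ L : List (Formula α.Char), (∀ E ∈ L, E ∈ Γ) ∧
      Hprf α 𝒜 ((lConj L).imp A) := by
  obtain ⟨L, hL, h'⟩ := h.compact
  refine ⟨L, hL, Prov.toHprf ?_⟩
  refine Prov.deduction ?_
  refine Prov.trans_set (Γ' := {E | E ∈ L}) (h' _ fun E hE => hE) ?_
  exact fun E hE => lConj_elim hE Prov.hyp0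

theorem Prov.ofConj {L : List (Formula α.Char)} (hL : ∀ E ∈ L, E ∈ Γ)
    (h : Hprf α 𝒜 ((lConj L).imp A)) : Prov α 𝒜 Γ A :=
  Prov.mp (Prov.ax h) (lConj_intro fun E hE => Prov.hyp (hL E hE))

theorem split_imp {L : List (Formula α.Char)} {S₁ S₂ : Set (Formula α.Char)}
    (hL : ∀ E ∈ L, E ∈ S₁ ∪ S₂) (h : Hprf α 𝒜 ((lConj L).imp A)) :
    ∃ L₁ L₂ : List (Formula α.Char), (∀ E ∈ L₁, E ∈ S₁) ∧ (∀ E ∈ L₂, E ∈ S₂) ∧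
      Hprf α 𝒜 ((lConj L₂).imp ((lConj L₁).imp A)) := by
  classical
  refine ⟨L.filter (fun E => E ∈ S₁), L.filter (fun E => ¬ E ∈ S₁), ?_, ?_, ?_⟩
  · intro E hE; simpa using (List.mem_filter.mp hE).2
  · intro E hE
    have h1 := List.mem_filter.mp hE
    rcases hL E h1.1 with h' | h'
    · exact absurd h' (by simpa using h1.2)
    · exact h'
  · refine Prov.toHprf (Prov.deduction (Prov.deduction ?_))
    have hconj : Prov α 𝒜 (insert (lConj (L.filter (fun E => E ∈ S₁)))
        (insert (lConj (L.filter (fun E => ¬ E ∈ S₁))) (∅ : Set (Formula α.Char))))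
        (lConj L) := by
      refine lConj_intro fun E hE => ?_
      by_cases hE1 : E ∈ S₁
      · exact lConj_elim (List.mem_filter.mpr ⟨hE, by simpa using hE1⟩) Prov.hyp0
      · exact lConj_elim (List.mem_filter.mpr ⟨hE, by simpa using hE1⟩)
          (Prov.hyp (Set.mem_insert_iff.mpr (Or.inr (Set.mem_insert _ _))))
    exact Prov.mp (Prov.ax h) hconj

theorem lConj_const {L : List (Formula α.Char)} (hL : ∀ E ∈ L, E = A) :
    Prov α 𝒜 Γ (A.imp (lConj L)) :=
  Prov.deduction (lConj_intro fun E hE => by rw [hL E hE]; exact Prov.hyp0)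

/-! #### Derived modal principles -/

theorem Hprf.box_mono {x : α.Char} (h : Hprf α 𝒜 (A.imp B)) :
    Hprf α 𝒜 ((Formula.box x A).imp (Formula.box x B)) :=
  Hprf.mp _ _ (Hprf.axK x A B) (Hprf.nec x _ h)

theorem Hprf.dia_mono {x : α.Char} (h : Hprf α 𝒜 (A.imp B)) :
    Hprf α 𝒜 ((Formula.dia x A).imp (Formula.dia x B)) :=
  Hprf.mp _ _ (Hprf.axKdia x A B) (Hprf.nec x _ h)

theorem boxConj {x : α.Char} (L : List (Formula α.Char)) :
    Hprf α 𝒜 ((lConj (L.map (Formula.box x))).imp (Formula.box x (lConj L))) := by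
  induction L with
  | nil =>
    exact Hprf.mp _ _ (Hprf.ipl1 _ _) (Hprf.nec x _ (Hprf.imp_self _))
  | cons B L ih =>
    refine Prov.toHprf (Prov.deduction ?_)
    have h1 : Prov α 𝒜 (insert (lConj ((B :: L).map (Formula.box x))) ∅)
        (Formula.box x B) := Prov.and_left Prov.hyp0
    have h2 : Prov α 𝒜 (insert (lConj ((B :: L).map (Formula.box x))) ∅)
        (Formula.box x (lConj L)) :=
      Prov.mp (Prov.ax ih) (Prov.and_right Prov.hyp0)
    have h3 := (Hprf.axBoxAnd (𝒜 := 𝒜) x B (lConj L))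
    exact Prov.mp (Prov.and_right (Prov.ax h3)) (Prov.and_intro h1 h2)

theorem diaDisj {x : α.Char} (L : List (Formula α.Char)) :
    Hprf α 𝒜 ((Formula.dia x (lDisj L)).imp (lDisj (L.map (Formula.dia x)))) := by
  induction L with
  | nil => exact Hprf.axNotDiaBot x
  | cons B L ih =>
    refine Prov.toHprf (Prov.deduction ?_)
    have h1 : Prov α 𝒜 (insert (Formula.dia x (lDisj (B :: L))) ∅)
        ((Formula.dia x B).or (Formula.dia x (lDisj L))) :=
      Prov.mp (Prov.and_left (Prov.ax (Hprf.axDiaOr x B (lDisj L)))) Prov.hyp0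
    refine Prov.or_elim h1 (Prov.ax (Hprf.ipl3 _ _)) ?_
    exact Prov.imp_trans (Prov.ax ih) (Prov.ax (Hprf.ipl4 _ _))

/-- The key Fischer-Servi consequence:
`[x](A∨E) ⊃ ((⟨x⟩E ⊃ [x]A) ⊃ [x]A)`. -/
theorem fsKey {x : α.Char} (A E : Formula α.Char) :
    Hprf α 𝒜 ((Formula.box x (A.or E)).imp
      (((Formula.dia x E).imp (Formula.box x A)).imp (Formula.box x A))) := by
  refine Prov.toHprf (Prov.deduction (Prov.deduction ?_))
  have hEA : Prov α 𝒜 (insert ((Formula.dia x E).imp (Formula.box x A))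
      (insert (Formula.box x (A.or E)) ∅)) (Formula.box x (E.imp A)) :=
    Prov.mp (Prov.ax (Hprf.axFS x E A)) Prov.hyp0
  have hprop : Hprf α 𝒜 ((E.imp A).imp ((A.or E).imp A)) := by
    refine Prov.toHprf (Prov.deduction (Prov.deduction ?_))
    exact Prov.or_elim Prov.hyp0 (Prov.ax (Hprf.imp_self _))
      (Prov.hyp (Set.mem_insert_iff.mpr (Or.inr (Set.mem_insert _ _))))
  have h2 : Prov α 𝒜 (insert ((Formula.dia x E).imp (Formula.box x A))
      (insert (Formula.box x (A.or E)) ∅)) (Formula.box x ((A.or E).imp A)) :=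
    Prov.mp (Prov.ax (Hprf.box_mono hprop)) hEA
  refine Prov.mp (Prov.mp (Prov.ax (Hprf.axK x (A.or E) A)) h2) ?_
  exact Prov.hyp (Set.mem_insert_iff.mpr (Or.inr (Set.mem_insert _ _)))

end Toolkit

/-! ### Prime theories -/

/-- A prime theory. -/
structure IsPrime (α : Alphabet) (𝒜 : Set (Ax α.Char)) (Δ : Set (Formula α.Char)) :
    Prop where
  closed : ∀ {B}, Prov α 𝒜 Δ B → B ∈ Δ
  nobot : Formula.bot ∉ Δ
  prime : ∀ {B C}, Formula.or B C ∈ Δ → B ∈ Δ ∨ C ∈ Δ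

section Prime

variable {α : Alphabet} {𝒜 : Set (Ax α.Char)} {Δ : Set (Formula α.Char)}
variable {A B : Formula α.Char}

theorem IsPrime.mem_thm (h : IsPrime α 𝒜 Δ) (hB : Hprf α 𝒜 B) : B ∈ Δ :=
  h.closed (Prov.ax hB)

theorem IsPrime.mem_mp (h : IsPrime α 𝒜 Δ) (h1 : A.imp B ∈ Δ) (h2 : A ∈ Δ) :
    B ∈ Δ := h.closed (Prov.mp (Prov.hyp h1) (Prov.hyp h2))

theorem IsPrime.mem_imp (h : IsPrime α 𝒜 Δ) (h1 : Hprf α 𝒜 (A.imp B))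
    (h2 : A ∈ Δ) : B ∈ Δ := h.closed (Prov.mp (Prov.ax h1) (Prov.hyp h2))

theorem IsPrime.mem_and (h : IsPrime α 𝒜 Δ) (h1 : A ∈ Δ) (h2 : B ∈ Δ) :
    A.and B ∈ Δ := h.closed (Prov.and_intro (Prov.hyp h1) (Prov.hyp h2))

theorem IsPrime.lConj_mem (h : IsPrime α 𝒜 Δ) {L : List (Formula α.Char)}
    (hL : ∀ E ∈ L, E ∈ Δ) : lConj L ∈ Δ :=
  h.closed (lConj_intro fun E hE => Prov.hyp (hL E hE))

theorem IsPrime.lDisj_cases (h : IsPrime α 𝒜 Δ) {L : List (Formula α.Char)}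
    (hL : lDisj L ∈ Δ) : ∃ E ∈ L, E ∈ Δ := by
  induction L with
  | nil => exact absurd hL h.nobot
  | cons B L ih =>
    rcases h.prime hL with h' | h'
    · exact ⟨B, by simp, h'⟩
    · obtain ⟨E, hE, hE'⟩ := ih h'
      exact ⟨E, by simp [hE], hE'⟩

end Prime

/-! ### Countability of formulae -/

section Count

variable {α : Alphabet}

private def encF (f : α.Char → ℕ) : Formula α.Char → ℕ
  | Formula.atom p => Nat.pair 0 p
  | Formula.bot => Nat.pair 1 0
  | Formula.or A B => Nat.pair 2 (Nat.pair (encF f A) (encF f B))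
  | Formula.and A B => Nat.pair 3 (Nat.pair (encF f A) (encF f B))
  | Formula.imp A B => Nat.pair 4 (Nat.pair (encF f A) (encF f B))
  | Formula.dia x A => Nat.pair 5 (Nat.pair (f x) (encF f A))
  | Formula.box x A => Nat.pair 6 (Nat.pair (f x) (encF f A))

private theorem encF_inj {f : α.Char → ℕ} (hf : Function.Injective f) :
    Function.Injective (encF f) := by
  intro A
  induction A with
  | atom p => intro B hB; cases B <;> simp [encF, Nat.pair_eq_pair] at hB <;> simp [hB]
  | bot => intro B hB; cases B <;> simp [encF, Nat.pair_eq_pair] at hB <;> rfl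
  | or A1 A2 ih1 ih2 =>
    intro B hB; cases B <;> simp [encF, Nat.pair_eq_pair] at hB
    rw [ih1 hB.1, ih2 hB.2]
  | and A1 A2 ih1 ih2 =>
    intro B hB; cases B <;> simp [encF, Nat.pair_eq_pair] at hB
    rw [ih1 hB.1, ih2 hB.2]
  | imp A1 A2 ih1 ih2 =>
    intro B hB; cases B <;> simp [encF, Nat.pair_eq_pair] at hB
    rw [ih1 hB.1, ih2 hB.2]
  | dia x A ih =>
    intro B hB; cases B <;> simp [encF, Nat.pair_eq_pair] at hB
    rw [hf hB.1, ih hB.2]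
  | box x A ih =>
    intro B hB; cases B <;> simp [encF, Nat.pair_eq_pair] at hB
    rw [hf hB.1, ih hB.2]

instance : Countable (Formula α.Char) := by
  have : Countable α.Char := α.countable
  obtain ⟨f, hf⟩ := exists_injective_nat α.Char
  exact ⟨⟨encF f, encF_inj hf⟩⟩

instance : Nonempty (Formula α.Char) := ⟨Formula.bot⟩

theorem exists_enum (α : Alphabet) :
    ∃ e : ℕ → Formula α.Char, Function.Surjective e :=
  exists_surjective_nat _

/-- An enumeration of pairs of formulae hitting every pair infinitely often. -/
theorem exists_enum_pairs (α : Alphabet) :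
    ∃ e : ℕ → Formula α.Char × Formula α.Char,
      ∀ b N, ∃ n, N ≤ n ∧ e n = b := by
  obtain ⟨g, hg⟩ := exists_surjective_nat (Formula α.Char × Formula α.Char)
  refine ⟨fun n => g n.unpair.2, fun b N => ?_⟩
  obtain ⟨k, hk⟩ := hg b
  exact ⟨Nat.pair N k, Nat.left_le_pair N k, by simp [Nat.unpair_pair, hk]⟩

end Count

/-! ### Lindenbaum lemmas -/

section Lindenbaum

variable {α : Alphabet} {𝒜 : Set (Ax α.Char)}

/-- A theory `T` is good for the constraint set `D` if no disjunction of
formulae outside `D` is provable from `T`. -/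
def GoodT (α : Alphabet) (𝒜 : Set (Ax α.Char)) (D T : Set (Formula α.Char)) : Prop :=
  ∀ L : List (Formula α.Char), (∀ E ∈ L, E ∉ D) → ¬ Prov α 𝒜 T (lDisj L)

theorem GoodT.anti {D T T' : Set (Formula α.Char)} (h : GoodT α 𝒜 D T')
    (hs : T ⊆ T') : GoodT α 𝒜 D T := fun L hL hP => h L hL (hP.mono hs)

theorem list_bound {X : Type*} {C : ℕ → Set X} (hm : ∀ m n, m ≤ n → C m ⊆ C n)
    (L : List X) (h : ∀ E ∈ L, E ∈ ⋃ n, C n) : ∃ n, ∀ E ∈ L, E ∈ C n := by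
  induction L with
  | nil => exact ⟨0, by simp⟩
  | cons B L ih =>
    obtain ⟨n, hn⟩ := ih fun E hE => h E (by simp [hE])
    obtain ⟨m, hm'⟩ := Set.mem_iUnion.mp (h B (by simp))
    refine ⟨max n m, fun E hE => ?_⟩
    rcases List.mem_cons.mp hE with rfl | hE
    · exact hm m (max n m) (le_max_right n m) hm'
    · exact hm n (max n m) (le_max_left n m) (hn E hE)

/-- The general Lindenbaum lemma. -/
theorem lindenbaum {D T : Set (Formula α.Char)} (hT : GoodT α 𝒜 D T) :
    ∃ Θ : Set (Formula α.Char), IsPrime α 𝒜 Θ ∧ T ⊆ Θ ∧ Θ ⊆ D := by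
  obtain ⟨e, he⟩ := exists_enum α
  let Ctx : ℕ → Set (Formula α.Char) := fun n => Nat.rec T
    (fun n S => S ∪ {B | B = e n ∧ GoodT α 𝒜 D (insert (e n) S)}) n
  have hCtx : ∀ n, Ctx (n + 1) =
      Ctx n ∪ {B | B = e n ∧ GoodT α 𝒜 D (insert (e n) (Ctx n))} := fun n => rfl
  have hmono : ∀ m n, m ≤ n → Ctx m ⊆ Ctx n := by
    intro m n h
    induction h with
    | refl => exact subset_rfl
    | step _ ih => exact ih.trans Set.subset_union_left
  have hgood : ∀ n, GoodT α 𝒜 D (Ctx n) := by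
    intro n
    induction n with
    | zero => exact hT
    | succ n ih =>
      by_cases hg : GoodT α 𝒜 D (insert (e n) (Ctx n))
      · have h1 : Ctx (n + 1) = insert (e n) (Ctx n) := by
          rw [hCtx n]; ext B; simp only [Set.mem_union, Set.mem_setOf_eq,
            Set.mem_insert_iff, hg, and_true]; tauto
        rw [h1]; exact hg
      · have h1 : Ctx (n + 1) = Ctx n := by
          rw [hCtx n]; ext B; simp [hg]
        rw [h1]; exact ih
  set U := ⋃ n, Ctx n with hUdef
  have hdir : ∀ {X}, Prov α 𝒜 U X → ∃ n, Prov α 𝒜 (Ctx n) X := by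
    intro X h
    obtain ⟨L, hL, h'⟩ := h.compact
    obtain ⟨n, hn⟩ := list_bound hmono L hL
    exact ⟨n, h' _ hn⟩
  have hgoodU : GoodT α 𝒜 D U := by
    intro L hL hP
    obtain ⟨n, hn⟩ := hdir hP
    exact hgood n L hL hn
  have key : ∀ B, ¬ Prov α 𝒜 U B →
      ∃ L, (∀ E ∈ L, E ∉ D) ∧ Prov α 𝒜 U (B.imp (lDisj L)) := by
    intro B hB
    obtain ⟨n, rfl⟩ := he B
    have hng : ¬ GoodT α 𝒜 D (insert (e n) (Ctx n)) := by
      intro hg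
      refine hB (Prov.hyp ?_)
      refine Set.mem_iUnion.mpr ⟨n + 1, ?_⟩
      rw [hCtx n]; exact Or.inr ⟨rfl, hg⟩
    simp only [GoodT, not_forall, not_not] at hng
    obtain ⟨L, hL, hP⟩ := hng
    refine ⟨L, hL, Prov.deduction (hP.mono ?_)⟩
    exact Set.insert_subset_insert (Set.subset_iUnion _ n)
  refine ⟨{B | Prov α 𝒜 U B}, ⟨?_, ?_, ?_⟩, ?_, ?_⟩
  · exact fun {B} h => Prov.trans_set h fun E hE => hE
  · intro h
    exact hgoodU [] (by simp) (by simpa [lDisj] using (h : Prov α 𝒜 U Formula.bot))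
  · intro B C h
    by_contra hc
    push_neg at hc
    obtain ⟨L1, hL1, h1⟩ := key B hc.1
    obtain ⟨L2, hL2, h2⟩ := key C hc.2
    have hD : Prov α 𝒜 U (lDisj (L1 ++ L2)) := by
      refine Prov.or_elim (h : Prov α 𝒜 U (B.or C)) ?_ ?_
      · exact h1.imp_trans (lDisj_mono fun E hE => List.mem_append_left _ hE)
      · exact h2.imp_trans (lDisj_mono fun E hE => List.mem_append_right _ hE)
    refine hgoodU (L1 ++ L2) ?_ hD
    intro E hE
    rcases List.mem_append.mp hE with h' | h'
    exacts [hL1 E h', hL2 E h']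
  · exact fun B hB => Prov.hyp (Set.mem_iUnion.mpr ⟨0, hB⟩)
  · intro B hB
    by_contra hBD
    exact hgoodU [B] (by simpa using hBD) (Prov.or_inl hB)

end Lindenbaum

/-! ### The box extension lemma -/

section BoxLemma

variable {α : Alphabet} {𝒜 : Set (Ax α.Char)}

/-- Extension of a prime theory omitting `[x]A` to one that is saturated for
the box case of the truth lemma. -/
theorem boxLemma {Δ : Set (Formula α.Char)} (hΔ : IsPrime α 𝒜 Δ)
    (x : α.Char) (A : Formula α.Char) (hA : Formula.box x A ∉ Δ) :
    ∃ Δ', IsPrime α 𝒜 Δ' ∧ Δ ⊆ Δ' ∧ Formula.box x A ∉ Δ' ∧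
      ∀ C E, Formula.box x C ∈ Δ' → Hprf α 𝒜 (C.imp (A.or E)) →
        Formula.dia x E ∈ Δ' := by
  obtain ⟨e, he⟩ := exists_enum α
  obtain ⟨pe, hpe⟩ := exists_enum_pairs α
  let Inv : Set (Formula α.Char) → Prop := fun S => ¬ Prov α 𝒜 S (Formula.box x A)
  let st1 : Set (Formula α.Char) → ℕ → Set (Formula α.Char) := fun S n =>
    S ∪ {B | B = e n ∧ Inv (insert (e n) S)}
  let st2 : Set (Formula α.Char) → ℕ → Set (Formula α.Char) := fun S n =>
    S ∪ {B | B = Formula.dia x (pe n).2 ∧ Prov α 𝒜 S (Formula.box x (pe n).1) ∧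
      Hprf α 𝒜 ((pe n).1.imp (A.or (pe n).2))}
  let Ctx : ℕ → Set (Formula α.Char) := fun n =>
    Nat.rec Δ (fun n S => st2 (st1 S n) n) n
  have hCtx : ∀ n, Ctx (n + 1) = st2 (st1 (Ctx n) n) n := fun n => rfl
  have hmono : ∀ m n, m ≤ n → Ctx m ⊆ Ctx n := by
    intro m n h
    induction h with
    | refl => exact subset_rfl
    | step _ ih =>
      exact ih.trans ((Set.subset_union_left).trans Set.subset_union_left)
  -- invariant preservation
  have hst1 : ∀ S n, Inv S → Inv (st1 S n) := by
    intro S n hS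
    by_cases hg : Inv (insert (e n) S)
    · have h1 : st1 S n = insert (e n) S := by
        ext B; simp only [st1, Set.mem_union, Set.mem_setOf_eq, hg, and_true,
          Set.mem_insert_iff]; tauto
      rw [h1]; exact hg
    · have h1 : st1 S n = S := by ext B; simp [st1, hg]
      rw [h1]; exact hS
  have hst2 : ∀ S n, Inv S → Inv (st2 S n) := by
    intro S n hS
    by_cases hg : Prov α 𝒜 S (Formula.box x (pe n).1) ∧
        Hprf α 𝒜 ((pe n).1.imp (A.or (pe n).2))
    · have h1 : st2 S n = insert (Formula.dia x (pe n).2) S := by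
        ext B; simp only [st2, Set.mem_union, Set.mem_setOf_eq, hg.1, hg.2,
          and_true, true_and, Set.mem_insert_iff]; tauto
      rw [h1]
      intro hP
      have h2 : Prov α 𝒜 S ((Formula.dia x (pe n).2).imp (Formula.box x A)) :=
        hP.deduction
      have h3 : Prov α 𝒜 S (Formula.box x (A.or (pe n).2)) :=
        Prov.mp (Prov.ax (Hprf.box_mono hg.2)) hg.1
      exact hS (Prov.mp (Prov.mp (Prov.ax (fsKey A (pe n).2)) h3) h2)
    · have h1 : st2 S n = S := by
        ext B
        simp only [st2, Set.mem_union, Set.mem_setOf_eq]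
        constructor
        · rintro (h | ⟨_, h2, h3⟩); exacts [h, absurd ⟨h2, h3⟩ hg]
        · exact Or.inl
      rw [h1]; exact hS
  have hgood : ∀ n, Inv (Ctx n) := by
    intro n
    induction n with
    | zero => exact fun hP => hA (hΔ.closed hP)
    | succ n ih => rw [hCtx n]; exact hst2 _ n (hst1 _ n ih)
  set U := ⋃ n, Ctx n with hUdef
  have hdir : ∀ {X}, Prov α 𝒜 U X → ∃ n, Prov α 𝒜 (Ctx n) X := by
    intro X h
    obtain ⟨L, hL, h'⟩ := h.compact
    obtain ⟨n, hn⟩ := list_bound hmono L hL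
    exact ⟨n, h' _ hn⟩
  have hInvU : Inv U := by
    intro hP
    obtain ⟨n, hn⟩ := hdir hP
    exact hgood n hn
  have key : ∀ B, ¬ Prov α 𝒜 U B → Prov α 𝒜 U (B.imp (Formula.box x A)) := by
    intro B hB
    obtain ⟨n, rfl⟩ := he B
    have hng : ¬ Inv (insert (e n) (Ctx n)) := by
      intro hg
      refine hB (Prov.hyp (Set.mem_iUnion.mpr ⟨n + 1, ?_⟩))
      rw [hCtx n]
      exact Set.mem_union_left _ (Or.inr ⟨rfl, hg⟩)
    simp only [Inv, not_not] at hng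
    exact Prov.deduction (hng.mono (Set.insert_subset_insert (Set.subset_iUnion _ n)))
  refine ⟨{B | Prov α 𝒜 U B}, ⟨?_, ?_, ?_⟩, ?_, ?_, ?_⟩
  · exact fun {B} h => Prov.trans_set h fun E hE => hE
  · intro h
    exact hInvU (Prov.exfalso (h : Prov α 𝒜 U Formula.bot))
  · intro B C h
    by_contra hc
    push_neg at hc
    exact hInvU (Prov.or_elim (h : Prov α 𝒜 U (B.or C)) (key B hc.1) (key C hc.2))
  · exact fun B hB => Prov.hyp (Set.mem_iUnion.mpr ⟨0, hB⟩)
  · exact hInvU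
  · intro C E hC hCE
    obtain ⟨m, hm⟩ := hdir hC
    obtain ⟨n, hmn, hn⟩ := hpe (C, E) m
    refine Prov.hyp (Set.mem_iUnion.mpr ⟨n + 1, ?_⟩)
    rw [hCtx n]
    refine Set.mem_union_right _ ?_
    refine ⟨by rw [hn], ?_, by rw [hn]; exact hCE⟩
    rw [hn]
    exact (hm.mono (hmono m n hmn)).mono Set.subset_union_left

end BoxLemma

/-! ### Soundness -/

section Soundness

variable {α : Alphabet} {𝒜 : Set (Ax α.Char)} {M : BiModel α}

theorem Sat.persist : ∀ {A : Formula α.Char} {w u : M.W}, M.le w u →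
    Sat M w A → Sat M u A := by
  intro A
  induction A with
  | atom p => intro w u h hS; exact M.mono w u h p hS
  | bot => intro w u h hS; exact hS.elim
  | or A B ihA ihB =>
    intro w u h hS
    rcases hS with hS | hS
    exacts [Or.inl (ihA h hS), Or.inr (ihB h hS)]
  | and A B ihA ihB => intro w u h hS; exact ⟨ihA h hS.1, ihB h hS.2⟩
  | imp A B ihA ihB =>
    intro w u h hS w' h' hA
    exact hS w' (M.le_trans _ _ _ h h') hA
  | dia x A ih =>
    intro w u h hS
    obtain ⟨v, hR, hA⟩ := hS
    obtain ⟨v', hR', hv⟩ := M.F2 x w u v h hR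
    exact ⟨v', hR', ih hv hA⟩
  | box x A ih =>
    intro w u h hS w' v' h' hR
    exact hS w' v' (M.le_trans _ _ _ h h') hR

/-- Interleaved paths `(≤ ; R)ⁿ`. -/
def IP (M : BiModel α) : List α.Char → M.W → M.W → Prop
  | [] => fun w u => w = u
  | x :: s => fun w u => ∃ w₁ u₁, M.le w w₁ ∧ M.R x w₁ u₁ ∧ IP M s u₁ u

theorem IP_straighten : ∀ {s : List α.Char} {w u : M.W}, IP M s w u →
    ∃ z, M.le w z ∧ M.Rs s z u := by
  intro s
  induction s with
  | nil => rintro w u rfl; exact ⟨w, M.le_refl w, rfl⟩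
  | cons y t ih =>
    rintro w u ⟨w₁, u₁, hle, hR, hIP⟩
    obtain ⟨z₁, hz₁, hRs⟩ := ih hIP
    obtain ⟨w₁', hw₁', hR'⟩ := M.F1 y w₁ u₁ z₁ hR hz₁
    exact ⟨w₁', M.le_trans _ _ _ hle hw₁', z₁, hR', hRs⟩

theorem sat_boxes_intro {A : Formula α.Char} : ∀ {s : List α.Char} {w : M.W},
    (∀ u, IP M s w u → Sat M u A) → Sat M w (boxes s A) := by
  intro s
  induction s with
  | nil => intro w h; exact h w rfl
  | cons y t ih =>
    intro w h w₁ u₁ hle hR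
    exact ih fun u hIP => h u ⟨w₁, u₁, hle, hR, hIP⟩

theorem sat_dias {A : Formula α.Char} : ∀ {s : List α.Char} {w : M.W},
    Sat M w (dias s A) → ∃ u, M.Rs s w u ∧ Sat M u A := by
  intro s
  induction s with
  | nil => intro w h; exact ⟨w, rfl, h⟩
  | cons y t ih =>
    rintro w ⟨v, hR, hS⟩
    obtain ⟨u, hRs, hA⟩ := ih hS
    exact ⟨u, ⟨v, hR, hRs⟩, hA⟩

theorem soundness {A : Formula α.Char} (h : Hprf α 𝒜 A) :
    ∀ (M : BiModel α), AModel 𝒜 M → ∀ w : M.W, Sat M w A := by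
  induction h with
  | ipl1 A B =>
    intro M hM w w1 h1 hA w2 h2 _
    exact Sat.persist h2 hA
  | ipl2 A B C =>
    intro M hM w w1 h1 hABC w2 h2 hAB w3 h3 hA
    exact hABC w3 (M.le_trans _ _ _ h2 h3) hA w3 (M.le_refl w3)
      (hAB w3 h3 hA)
  | ipl3 A B => intro M hM w w1 _ hA; exact Or.inl hA
  | ipl4 A B => intro M hM w w1 _ hB; exact Or.inr hB
  | ipl5 A B C =>
    intro M hM w w1 h1 hAC w2 h2 hBC w3 h3 hAB
    rcases hAB with h | h
    · exact hAC w3 (M.le_trans _ _ _ h2 h3) h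
    · exact hBC w3 h3 h
  | ipl6 A B => intro M hM w w1 _ h; exact h.1
  | ipl7 A B => intro M hM w w1 _ h; exact h.2
  | ipl8 A B =>
    intro M hM w w1 h1 hA w2 h2 hB
    exact ⟨Sat.persist h2 hA, hB⟩
  | ipl9 A => intro M hM w w1 _ h; exact h.elim
  | axK x A B =>
    intro M hM w w1 h1 hAB w2 h2 hA w3 v h3 hR
    exact hAB w3 v (M.le_trans _ _ _ h2 h3) hR v (M.le_refl v)
      (hA w3 v h3 hR)
  | axBoxAnd x A B =>
    intro M hM w
    refine ⟨fun w1 h1 h => ⟨fun u v hle hR => (h u v hle hR).1,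
      fun u v hle hR => (h u v hle hR).2⟩,
      fun w1 h1 h u v hle hR => ⟨h.1 u v hle hR, h.2 u v hle hR⟩⟩
  | axDiaOr x A B =>
    intro M hM w
    constructor
    · rintro w1 h1 ⟨v, hR, hS | hS⟩
      exacts [Or.inl ⟨v, hR, hS⟩, Or.inr ⟨v, hR, hS⟩]
    · rintro w1 h1 (⟨v, hR, hS⟩ | ⟨v, hR, hS⟩)
      exacts [⟨v, hR, Or.inl hS⟩, ⟨v, hR, Or.inr hS⟩]
  | axKdia x A B =>
    intro M hM w w1 h1 hbox w2 h2 hdia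
    obtain ⟨v, hR, hA⟩ := hdia
    exact ⟨v, hR, hbox w2 v h2 hR v (M.le_refl v) hA⟩
  | axBoxDia x A B =>
    rintro M hM w w1 h1 ⟨hbox, v, hR, hB⟩
    exact ⟨v, hR, hbox w1 v (M.le_refl w1) hR, hB⟩
  | axNotDiaBot x =>
    rintro M hM w w1 h1 ⟨v, _, h⟩
    exact h.elim
  | axConv x A =>
    intro M hM w
    constructor
    · intro w1 h1 hA w2 v h2 hR
      exact ⟨w2, (M.F3 x w2 v).mp hR, Sat.persist h2 hA⟩
    · rintro w1 h1 ⟨v, hR, hbox⟩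
      exact hbox v w1 (M.le_refl v) ((M.F3 x w1 v).mp hR)
  | axFS x A B =>
    intro M hM w w1 h1 himp w2 v h2 hR v' hlev hA
    obtain ⟨w2', hw2', hR'⟩ := M.F1 x w2 v v' hR hlev
    exact himp w2' (M.le_trans _ _ _ h2 hw2') ⟨v', hR', hA⟩ w2' v'
      (M.le_refl w2') hR'
  | axDiaImp x A B =>
    intro M hM w w1 h1 hdia w2 h2 hbox
    obtain ⟨v, hR, hAB⟩ := hdia
    obtain ⟨v', hR', hv⟩ := M.F2 x w1 w2 v h2 hR
    exact ⟨v', hR', hAB v' hv (hbox w2 v' (M.le_refl w2) hR')⟩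
  | axSer x A hax =>
    intro M hM w w1 h1 hbox
    obtain ⟨u, hRu⟩ := hM _ hax w1
    exact ⟨u, hRu, hbox w1 u (M.le_refl w1) hRu⟩
  | axIpa x s A hax =>
    intro M hM w
    constructor
    · intro w1 h1 hdias
      obtain ⟨u, hRs, hA⟩ := sat_dias hdias
      exact ⟨u, hM _ hax w1 u hRs, hA⟩
    · intro w1 h1 hbox
      refine sat_boxes_intro fun u hIP => ?_
      obtain ⟨z, hz, hRs⟩ := IP_straighten hIP
      exact hbox z u hz (hM _ hax z u hRs)
  | mp A B h1 h2 ih1 ih2 =>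
    intro M hM w
    exact ih1 M hM w w (M.le_refl w) (ih2 M hM w)
  | nec x A h ih =>
    intro M hM w w1 v h1 hR
    exact ih M hM v

/-- The one-point model. -/
def trivModel (α : Alphabet) : BiModel α where
  W := PUnit
  nonempty := ⟨⟨⟩⟩
  le _ _ := True
  le_refl _ := trivial
  le_trans _ _ _ _ _ := trivial
  R _ _ _ := True
  F1 _ w _ _ _ _ := ⟨w, trivial, trivial⟩
  F2 _ _ _ v _ _ := ⟨v, trivial, trivial⟩
  F3 _ _ _ := Iff.rfl
  V _ _ := False
  mono _ _ _ _ h := h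

theorem trivModel_AModel (α : Alphabet) (𝒜 : Set (Ax α.Char)) :
    AModel 𝒜 (trivModel α) := by
  intro a ha
  cases a with
  | ser x => exact fun w => ⟨w, trivial⟩
  | ipa x s => exact fun w u _ => trivial

theorem consistent : ¬ Hprf α 𝒜 Formula.bot := fun h =>
  soundness h (trivModel α) (trivModel_AModel α 𝒜) ⟨⟩

end Soundness

/-! ### The canonical model -/

section Canonical

variable {α : Alphabet} {𝒜 : Set (Ax α.Char)}

/-- The canonical accessibility relation. -/
def canR (x : α.Char) (Δ Θ : Set (Formula α.Char)) : Prop :=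
  (∀ B, Formula.box x B ∈ Δ → B ∈ Θ) ∧ (∀ B, B ∈ Θ → Formula.dia x B ∈ Δ)

theorem canR_conv {x : α.Char} {Δ Θ : Set (Formula α.Char)}
    (hΔ : IsPrime α 𝒜 Δ) (h : canR x Δ Θ) : canR (α.conv x) Θ Δ := by
  constructor
  · intro B hB
    exact hΔ.mem_imp (Hprf.mp _ _ (Hprf.ipl7 _ _) (Hprf.axConv x B)) (h.2 _ hB)
  · intro B hB
    exact h.1 _ (hΔ.mem_imp (Hprf.mp _ _ (Hprf.ipl6 _ _) (Hprf.axConv x B)) hB)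

theorem diaContra {x : α.Char} {Δ : Set (Formula α.Char)} {L : List (Formula α.Char)}
    (hΔ : IsPrime α 𝒜 Δ) (h : Formula.dia x (lDisj L) ∈ Δ) :
    ∃ E ∈ L, Formula.dia x E ∈ Δ := by
  have h1 : lDisj (L.map (Formula.dia x)) ∈ Δ := hΔ.mem_imp (diaDisj L) h
  obtain ⟨E', hE', hmem⟩ := hΔ.lDisj_cases h1
  obtain ⟨E, hE, rfl⟩ := List.mem_map.mp hE'
  exact ⟨E, hE, hmem⟩

theorem boxConj_mem {x : α.Char} {Δ : Set (Formula α.Char)} {L : List (Formula α.Char)}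
    (hΔ : IsPrime α 𝒜 Δ) (h : ∀ E ∈ L, Formula.box x E ∈ Δ) :
    Formula.box x (lConj L) ∈ Δ := by
  refine hΔ.mem_imp (boxConj L) (hΔ.lConj_mem ?_)
  intro E hE
  obtain ⟨C, hC, rfl⟩ := List.mem_map.mp hE
  exact h C hC

/-- Seriality of the canonical relation. -/
theorem canSer {x : α.Char} {Δ : Set (Formula α.Char)} (hax : Ax.ser x ∈ 𝒜)
    (hΔ : IsPrime α 𝒜 Δ) : ∃ Θ, IsPrime α 𝒜 Θ ∧ canR x Δ Θ := by
  have hgood : GoodT α 𝒜 {B | Formula.dia x B ∈ Δ} {B | Formula.box x B ∈ Δ} := by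
    intro L hL hP
    obtain ⟨L₀, hL₀, h0⟩ := hP.finConj
    have h1 : Formula.box x (lConj L₀) ∈ Δ := boxConj_mem hΔ hL₀
    have h2 : Formula.dia x (lConj L₀) ∈ Δ :=
      hΔ.mem_imp (Hprf.axSer x _ hax) h1
    have h3 : Formula.dia x (lDisj L) ∈ Δ := hΔ.mem_imp (Hprf.dia_mono h0) h2
    obtain ⟨E, hE, hmem⟩ := diaContra hΔ h3
    exact hL E hE hmem
  obtain ⟨Θ, hΘ, hT, hD⟩ := lindenbaum hgood
  exact ⟨Θ, hΘ, fun B hB => hT hB, fun B hB => hD hB⟩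

/-- The extension property giving condition (F2). -/
theorem canF2ext {x : α.Char} {Δ Δ' Θ : Set (Formula α.Char)}
    (hΔ' : IsPrime α 𝒜 Δ') (hΘ : IsPrime α 𝒜 Θ) (hsub : Δ ⊆ Δ')
    (hR : canR x Δ Θ) : ∃ Θ', IsPrime α 𝒜 Θ' ∧ canR x Δ' Θ' ∧ Θ ⊆ Θ' := by
  have hgood : GoodT α 𝒜 {B | Formula.dia x B ∈ Δ'}
      (Θ ∪ {B | Formula.box x B ∈ Δ'}) := by
    intro L hL hP
    obtain ⟨L₀, hL₀, h0⟩ := hP.finConj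
    obtain ⟨L₁, L₂, hL₁, hL₂, h1⟩ := split_imp hL₀ h0
    have h2 : Formula.box x (lConj L₂) ∈ Δ' := boxConj_mem hΔ' hL₂
    have h3 : Formula.box x ((lConj L₁).imp (lDisj L)) ∈ Δ' :=
      hΔ'.mem_imp (Hprf.box_mono h1) h2
    have h4 : Formula.dia x (lConj L₁) ∈ Δ' := hsub (hR.2 _ (hΘ.lConj_mem hL₁))
    have h5 : Formula.dia x (lDisj L) ∈ Δ' :=
      hΔ'.mem_mp (hΔ'.mem_imp (Hprf.axKdia x _ _) h3) h4
    obtain ⟨E, hE, hmem⟩ := diaContra hΔ' h5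
    exact hL E hE hmem
  obtain ⟨Θ', hΘ', hT, hD⟩ := lindenbaum hgood
  exact ⟨Θ', hΘ', ⟨fun B hB => hT (Or.inr hB), fun B hB => hD hB⟩,
    fun B hB => hT (Or.inl hB)⟩

/-- Witness for the diamond case of the truth lemma. -/
theorem canDia {x : α.Char} {Δ : Set (Formula α.Char)} {A : Formula α.Char}
    (hΔ : IsPrime α 𝒜 Δ) (h : Formula.dia x A ∈ Δ) :
    ∃ Θ, IsPrime α 𝒜 Θ ∧ canR x Δ Θ ∧ A ∈ Θ := by
  have hgood : GoodT α 𝒜 {B | Formula.dia x B ∈ Δ}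
      (insert A {B | Formula.box x B ∈ Δ}) := by
    intro L hL hP
    obtain ⟨L₀, hL₀, h0⟩ := hP.finConj
    have hL₀' : ∀ E ∈ L₀, E ∈ ({A} : Set (Formula α.Char)) ∪
        {B | Formula.box x B ∈ Δ} := by
      intro E hE
      rcases hL₀ E hE with h' | h'
      exacts [Or.inl h', Or.inr h']
    obtain ⟨L₁, L₂, hL₁, hL₂, h1⟩ := split_imp hL₀' h0
    have hAc : Prov α 𝒜 ∅ ((lConj L₂).imp (A.imp (lDisj L))) := by
      refine Prov.deduction (Prov.deduction ?_)
      refine Prov.mp (Prov.mp (Prov.ax h1).wk.wk ?_) ?_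
      · exact Prov.hyp (Set.mem_insert_iff.mpr (Or.inr (Set.mem_insert _ _)))
      · exact Prov.mp (lConj_const fun E hE => hL₁ E hE) Prov.hyp0
    have h2 : Formula.box x (lConj L₂) ∈ Δ := boxConj_mem hΔ hL₂
    have h3 : Formula.box x (A.imp (lDisj L)) ∈ Δ :=
      hΔ.mem_imp (Hprf.box_mono hAc.toHprf) h2
    have h5 : Formula.dia x (lDisj L) ∈ Δ :=
      hΔ.mem_mp (hΔ.mem_imp (Hprf.axKdia x _ _) h3) h
    obtain ⟨E, hE, hmem⟩ := diaContra hΔ h5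
    exact hL E hE hmem
  obtain ⟨Θ, hΘ, hT, hD⟩ := lindenbaum hgood
  exact ⟨Θ, hΘ, ⟨fun B hB => hT (Set.mem_insert_iff.mpr (Or.inr hB)),
    fun B hB => hD hB⟩, hT (Set.mem_insert _ _)⟩

/-- Witnesses for the box case of the truth lemma. -/
theorem canBox {x : α.Char} {Δ : Set (Formula α.Char)} {A : Formula α.Char}
    (hΔ : IsPrime α 𝒜 Δ) (h : Formula.box x A ∉ Δ) :
    ∃ Δ' Θ, IsPrime α 𝒜 Δ' ∧ IsPrime α 𝒜 Θ ∧ Δ ⊆ Δ' ∧ canR x Δ' Θ ∧ A ∉ Θ := by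
  classical
  obtain ⟨Δ', hΔ', hsub, hboxA, hsat⟩ := boxLemma hΔ x A h
  have hgood : GoodT α 𝒜 {B | Formula.dia x B ∈ Δ' ∧ B ≠ A}
      {B | Formula.box x B ∈ Δ'} := by
    intro L hL hP
    obtain ⟨L₀, hL₀, h0⟩ := hP.finConj
    set L₁ := L.filter (fun E => E ≠ A) with hL₁def
    have hsplit : Prov α 𝒜 ∅ ((lDisj L).imp (A.or (lDisj L₁))) := by
      refine lDisj_elim' fun E hE => ?_
      by_cases hEA : E = A
      · subst hEA; exact Prov.ax (Hprf.ipl3 _ _)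
      · refine Prov.imp_trans (Prov.deduction (lDisj_intro ?_ Prov.hyp0))
          (Prov.ax (Hprf.ipl4 _ _))
        exact List.mem_filter.mpr ⟨hE, by simpa using hEA⟩
    have h1 : Hprf α 𝒜 ((lConj L₀).imp (A.or (lDisj L₁))) :=
      ((Prov.ax h0).imp_trans hsplit).toHprf
    have h2 : Formula.box x (lConj L₀) ∈ Δ' := boxConj_mem hΔ' hL₀
    have h3 : Formula.dia x (lDisj L₁) ∈ Δ' := hsat _ _ h2 h1
    obtain ⟨E, hE, hmem⟩ := diaContra hΔ' h3
    have hE1 := List.mem_filter.mp hE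
    exact hL E hE1.1 ⟨hmem, by simpa using hE1.2⟩
  obtain ⟨Θ, hΘ, hT, hD⟩ := lindenbaum hgood
  refine ⟨Δ', Θ, hΔ', hΘ, hsub, ⟨fun B hB => hT hB, fun B hB => (hD hB).1⟩, ?_⟩
  intro hA
  exact (hD hA).2 rfl

/-- Existence of a prime theory. -/
theorem exists_prime (α : Alphabet) (𝒜 : Set (Ax α.Char)) :
    ∃ Δ, IsPrime α 𝒜 Δ := by
  have hgood : GoodT α 𝒜 {E | E ≠ Formula.bot} (∅ : Set (Formula α.Char)) := by
    intro L hL hP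
    have hB : Prov α 𝒜 ∅ Formula.bot := by
      refine lDisj_elim hP fun E hE => ?_
      have : E = Formula.bot := by simpa using hL E hE
      rw [this]; exact Prov.ax (Hprf.imp_self _)
    exact consistent hB.toHprf
  obtain ⟨Δ, hΔ, _, _⟩ := lindenbaum hgood
  exact ⟨Δ, hΔ⟩

/-- The canonical model. -/
def canonM (α : Alphabet) (𝒜 : Set (Ax α.Char)) : BiModel α where
  W := {Δ : Set (Formula α.Char) // IsPrime α 𝒜 Δ}
  nonempty := by
    obtain ⟨Δ, hΔ⟩ := exists_prime α 𝒜
    exact ⟨⟨Δ, hΔ⟩⟩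
  le Δ Θ := Δ.1 ⊆ Θ.1
  le_refl Δ := subset_rfl
  le_trans Δ Θ Λ h1 h2 := h1.trans h2
  R x Δ Θ := canR x Δ.1 Θ.1
  F1 := by
    intro x w v v' hR hle
    have h1 : canR (α.conv x) v.1 w.1 := canR_conv w.2 hR
    obtain ⟨Δ', hΔ', hR', hsub⟩ := canF2ext v'.2 w.2 hle h1
    refine ⟨⟨Δ', hΔ'⟩, hsub, ?_⟩
    have := canR_conv (𝒜 := 𝒜) v'.2 hR'
    rwa [α.conv_conv] at this
  F2 := by
    intro x w w' v hle hR
    obtain ⟨Θ', hΘ', hR', hsub⟩ := canF2ext w'.2 v.2 hle hR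
    exact ⟨⟨Θ', hΘ'⟩, hR', hsub⟩
  F3 := by
    intro x w u
    constructor
    · intro h; exact canR_conv w.2 h
    · intro h
      have := canR_conv (𝒜 := 𝒜) u.2 h
      rwa [α.conv_conv] at this
  V Δ p := Formula.atom p ∈ Δ.1
  mono Δ Θ h p hp := h hp

theorem canRs_box {B : Formula α.Char} : ∀ {s : List α.Char}
    {w u : (canonM α 𝒜).W}, (canonM α 𝒜).Rs s w u →
      boxes s B ∈ w.1 → B ∈ u.1 := by
  intro s
  induction s with
  | nil => intro w u h hB; rw [show w = u from h] at hB; exact hB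
  | cons y t ih =>
    rintro w u ⟨v, hR, hRs⟩ hB
    exact ih hRs (hR.1 _ hB)

theorem canRs_dia {B : Formula α.Char} : ∀ {s : List α.Char}
    {w u : (canonM α 𝒜).W}, (canonM α 𝒜).Rs s w u →
      B ∈ u.1 → dias s B ∈ w.1 := by
  intro s
  induction s with
  | nil => intro w u h hB; rw [show w = u from h]; exact hB
  | cons y t ih =>
    rintro w u ⟨v, hR, hRs⟩ hB
    exact hR.2 _ (ih hRs hB)

theorem canonM_AModel (α : Alphabet) (𝒜 : Set (Ax α.Char)) :
    AModel 𝒜 (canonM α 𝒜) := by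
  intro a ha
  cases a with
  | ser x =>
    intro w
    obtain ⟨Θ, hΘ, hR⟩ := canSer ha w.2
    exact ⟨⟨Θ, hΘ⟩, hR⟩
  | ipa x s =>
    intro w u hRs
    constructor
    · intro B hB
      refine canRs_box hRs (w.2.mem_imp ?_ hB)
      exact Hprf.mp _ _ (Hprf.ipl7 _ _) (Hprf.axIpa x s B ha)
    · intro B hB
      refine w.2.mem_imp (Hprf.mp _ _ (Hprf.ipl6 _ _) (Hprf.axIpa x s B ha)) ?_
      exact canRs_dia hRs hB

theorem goodNe {T : Set (Formula α.Char)} {G : Formula α.Char}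
    (h : ¬ Prov α 𝒜 T G) : GoodT α 𝒜 {E | E ≠ G} T := by
  intro L hL hP
  refine h (lDisj_elim hP fun E hE => ?_)
  have : E = G := by simpa using hL E hE
  rw [this]
  exact Prov.ax (Hprf.imp_self _)

/-- The truth lemma. -/
theorem truth : ∀ (B : Formula α.Char) (Δ : (canonM α 𝒜).W),
    Sat (canonM α 𝒜) Δ B ↔ B ∈ Δ.1 := by
  intro B
  induction B with
  | atom p => intro Δ; exact Iff.rfl
  | bot => intro Δ; exact ⟨fun h => h.elim, fun h => Δ.2.nobot h⟩
  | or A B ihA ihB =>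
    intro Δ
    constructor
    · rintro (h | h)
      · exact Δ.2.closed (Prov.or_inl (Prov.hyp ((ihA Δ).mp h)))
      · exact Δ.2.closed (Prov.or_inr (Prov.hyp ((ihB Δ).mp h)))
    · intro h
      rcases Δ.2.prime h with h | h
      exacts [Or.inl ((ihA Δ).mpr h), Or.inr ((ihB Δ).mpr h)]
  | and A B ihA ihB =>
    intro Δ
    constructor
    · rintro ⟨h1, h2⟩
      exact Δ.2.mem_and ((ihA Δ).mp h1) ((ihB Δ).mp h2)
    · intro h
      exact ⟨(ihA Δ).mpr (Δ.2.mem_imp (Hprf.ipl6 _ _) h),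
        (ihB Δ).mpr (Δ.2.mem_imp (Hprf.ipl7 _ _) h)⟩
  | imp A B ihA ihB =>
    intro Δ
    constructor
    · intro hS
      by_contra h
      have hnp : ¬ Prov α 𝒜 (insert A Δ.1) B := fun hP =>
        h (Δ.2.closed hP.deduction)
      obtain ⟨Θ, hΘ, hT, hD⟩ := lindenbaum (goodNe hnp)
      have hle : Δ.1 ⊆ Θ := fun E hE => hT (Set.mem_insert_iff.mpr (Or.inr hE))
      have hA : Sat (canonM α 𝒜) ⟨Θ, hΘ⟩ A :=
        (ihA ⟨Θ, hΘ⟩).mpr (hT (Set.mem_insert _ _))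
      have hB : B ∈ Θ := (ihB ⟨Θ, hΘ⟩).mp (hS ⟨Θ, hΘ⟩ hle hA)
      exact hD hB rfl
    · intro h Δ' hle hA
      exact (ihB Δ').mpr (Δ'.2.mem_mp (hle h) ((ihA Δ').mp hA))
  | dia x A ihA =>
    intro Δ
    constructor
    · rintro ⟨v, hR, hA⟩
      exact hR.2 _ ((ihA v).mp hA)
    · intro h
      obtain ⟨Θ, hΘ, hR, hA⟩ := canDia Δ.2 h
      exact ⟨⟨Θ, hΘ⟩, hR, (ihA ⟨Θ, hΘ⟩).mpr hA⟩
  | box x A ihA =>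
    intro Δ
    constructor
    · intro hS
      by_contra h
      obtain ⟨Δ', Θ, hΔ', hΘ, hsub, hR, hA⟩ := canBox Δ.2 h
      exact hA ((ihA ⟨Θ, hΘ⟩).mp (hS ⟨Δ', hΔ'⟩ ⟨Θ, hΘ⟩ hsub hR))
    · intro h Δ' v hle hR
      exact (ihA v).mpr (hR.1 _ (hle h))

end Canonical

/-! ### Relating `HderivFrom` and `Prov` -/

section Final

variable {α : Alphabet} {𝒜 : Set (Ax α.Char)}

theorem conjList_elems {Γ : Set (Formula α.Char)} :
    ∀ {L : List (Formula α.Char)} {B E : Formula α.Char},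
      Prov α 𝒜 Γ (conjList B L) → E = B ∨ E ∈ L → Prov α 𝒜 Γ E := by
  intro L
  induction L with
  | nil =>
    rintro B E h (rfl | hE)
    · exact h
    · simp at hE
  | cons C L ih =>
    rintro B E h (rfl | hE)
    · exact (ih h (Or.inl rfl)).and_left
    · rcases List.mem_cons.mp hE with rfl | hE
      · exact (ih h (Or.inl rfl)).and_right
      · exact ih h (Or.inr hE)

theorem sat_conjList {M : BiModel α} {w : M.W} :
    ∀ {L : List (Formula α.Char)} {B : Formula α.Char},
      Sat M w B → (∀ D ∈ L, Sat M w D) → Sat M w (conjList B L) := by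
  intro L
  induction L with
  | nil => intro B h _; exact h
  | cons C L ih =>
    intro B h hL
    exact ih ⟨h, hL C (by simp)⟩ fun D hD => hL D (by simp [hD])

theorem hderiv_of_prov {S : Set (Formula α.Char)} {A : Formula α.Char}
    (h : Prov α 𝒜 S A) : HderivFrom α 𝒜 S A := by
  obtain ⟨L, hL, h0⟩ := h.finConj
  cases L with
  | nil => exact Or.inl (Hprf.mp _ _ h0 (Hprf.imp_self _))
  | cons B L' =>
    refine Or.inr ⟨B, L', hL B (by simp), fun D hD => hL D (by simp [hD]), ?_⟩
    refine Prov.toHprf (Prov.deduction ?_)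
    refine Prov.mp (Prov.ax h0).wk (lConj_intro ?_)
    intro E hE
    rcases List.mem_cons.mp hE with rfl | hE
    · exact conjList_elems Prov.hyp0 (Or.inl rfl)
    · exact conjList_elems Prov.hyp0 (Or.inr hE)

end Final

/-- **Soundness and completeness of the axiomatization**: `𝒮 ⊢_𝒜 A` iff `𝒮`
semantically implies `A` over bi-relational (Σ,𝒜)-models. -/
theorem hilbert_sound_and_complete (α : Alphabet) (𝒜 : Set (Ax α.Char))
    (S : Set (Formula α.Char)) (A : Formula α.Char) :
    HderivFrom α 𝒜 S A ↔
      (∀ (M : BiModel α), AModel 𝒜 M → ∀ w : M.W,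
        (∀ B ∈ S, Sat M w B) → Sat M w A) := by
  constructor
  · rintro (h | ⟨B, L, hB, hL, h⟩) M hM w hS
    · exact soundness h M hM w
    · refine soundness h M hM w w (M.le_refl w) ?_
      exact sat_conjList (hS B hB) fun D hD => hS D (hL D hD)
  · intro hsem
    by_contra hnd
    have hnp : ¬ Prov α 𝒜 S A := fun hP => hnd (hderiv_of_prov hP)
    obtain ⟨Δ₀, hΔ₀, hT, hD⟩ := lindenbaum (goodNe hnp)
    have hS : ∀ B ∈ S, Sat (canonM α 𝒜) ⟨Δ₀, hΔ₀⟩ B := fun B hB =>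
      (truth B ⟨Δ₀, hΔ₀⟩).mpr (hT hB)
    have hA : A ∈ Δ₀ :=
      (truth A ⟨Δ₀, hΔ₀⟩).mp (hsem (canonM α 𝒜) (canonM_AModel α 𝒜) ⟨Δ₀, hΔ₀⟩ hS)
    exact hD hA rfl

end IGL
end

section
/- The rule (⊥_r), inferring R, Γ ⊢ u : A from R, Γ ⊢ w : ⊥, is hp-admissible in L_Σ(𝒜): if R, Γ ⊢ w : ⊥ has a proof of height h, then R, Γ ⊢ u : A has a proof of height at most h. -/
namespace IGL

/-! ### Auxiliary lemmas for hp-admissibility of `(⊥_r)` -/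

section BotRAux

variable {C : Type}

lemma subL_self (v u : ℕ) : subL v u v = u := if_pos rfl

lemma subL_ne {v l : ℕ} (u : ℕ) (h : l ≠ v) : subL v u l = l := if_neg h

lemma subL_cases (v u l : ℕ) : subL v u l = l ∨ subL v u l = u := by
  unfold subL; split <;> simp

lemma subR_cons (v u : ℕ) (w : ℕ) (x : C) (t : ℕ) (R : Multiset (Rel C)) :
    subR v u ((w, x, t) ::ₘ R) = (subL v u w, x, subL v u t) ::ₘ subR v u R :=
  Multiset.map_cons _ _ _

lemma subG_cons (v u : ℕ) (w : ℕ) (B : Formula C) (Γ : Multiset (LF C)) :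
    subG v u ((w, B) ::ₘ Γ) = (subL v u w, B) ::ₘ subG v u Γ :=
  Multiset.map_cons _ _ _

lemma subR_add (v u : ℕ) (m R : Multiset (Rel C)) :
    subR v u (m + R) = subR v u m + subR v u R := Multiset.map_add _ _ _

/-- A numeric bound on the labels occurring in `R`. -/
def relBound (R : Multiset (Rel C)) : ℕ := (R.map (fun a => a.1 + a.2.2)).sum

/-- A numeric bound on the labels occurring in `Γ`. -/
def lfBound (Γ : Multiset (LF C)) : ℕ := (Γ.map Prod.fst).sum

lemma le_relBound {l : ℕ} {R : Multiset (Rel C)} (h : l ∈ relLabels R) :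
    l ≤ relBound R := by
  obtain ⟨a, ha, hl⟩ := h
  have hmem : a.1 + a.2.2 ∈ R.map (fun a => a.1 + a.2.2) :=
    Multiset.mem_map_of_mem _ ha
  have hs := Multiset.single_le_sum (fun x _ => Nat.zero_le x) _ hmem
  unfold relBound
  rcases hl with rfl | rfl <;> omega

lemma le_lfBound {l : ℕ} {Γ : Multiset (LF C)} (h : l ∈ lfLabels Γ) :
    l ≤ lfBound Γ := by
  obtain ⟨b, hb, rfl⟩ := h
  have hmem : b.1 ∈ Γ.map Prod.fst := Multiset.mem_map_of_mem _ hb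
  exact Multiset.single_le_sum (fun x _ => Nat.zero_le x) _ hmem

lemma subR_eq_self {v : ℕ} (u : ℕ) {R : Multiset (Rel C)} (h : v ∉ relLabels R) :
    subR v u R = R := by
  have hc : ∀ a ∈ R, (subL v u a.1, a.2.1, subL v u a.2.2) = id a := by
    intro a ha
    have h1 : a.1 ≠ v := fun e => h ⟨a, ha, Or.inl e⟩
    have h2 : a.2.2 ≠ v := fun e => h ⟨a, ha, Or.inr e⟩
    simp [subL_ne u h1, subL_ne u h2]
  rw [show subR v u R = R.map (fun a => (subL v u a.1, a.2.1, subL v u a.2.2)) from rfl,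
    Multiset.map_congr rfl hc, Multiset.map_id]

lemma subG_eq_self {v : ℕ} (u : ℕ) {Γ : Multiset (LF C)} (h : v ∉ lfLabels Γ) :
    subG v u Γ = Γ := by
  have hc : ∀ b ∈ Γ, (subL v u b.1, b.2) = id b := by
    intro b hb
    have h1 : b.1 ≠ v := fun e => h ⟨b, hb, e⟩
    simp [subL_ne u h1]
  rw [show subG v u Γ = Γ.map (fun b => (subL v u b.1, b.2)) from rfl,
    Multiset.map_congr rfl hc, Multiset.map_id]

lemma mem_lfLabels_cons {l w : ℕ} {B : Formula C} {Γ : Multiset (LF C)} :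
    l ∈ lfLabels ((w, B) ::ₘ Γ) ↔ l = w ∨ l ∈ lfLabels Γ := by
  constructor
  · rintro ⟨b, hb, rfl⟩
    rcases Multiset.mem_cons.1 hb with rfl | hb
    · exact Or.inl rfl
    · exact Or.inr ⟨b, hb, rfl⟩
  · rintro (h | ⟨b, hb, rfl⟩)
    · exact ⟨(w, B), Multiset.mem_cons_self _ _, h.symm⟩
    · exact ⟨b, Multiset.mem_cons_of_mem hb, rfl⟩

lemma relLabels_subR {v u l : ℕ} {R : Multiset (Rel C)}
    (h : l ∈ relLabels (subR v u R)) : l ∈ relLabels R ∨ l = u := by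
  obtain ⟨b, hb, hl⟩ := h
  obtain ⟨a, ha, rfl⟩ := Multiset.mem_map.1 hb
  rcases hl with h1 | h1
  · rcases subL_cases v u a.1 with e | e
    · exact Or.inl ⟨a, ha, Or.inl (by rw [e] at h1; exact h1)⟩
    · exact Or.inr (by rw [e] at h1; exact h1.symm)
  · rcases subL_cases v u a.2.2 with e | e
    · exact Or.inl ⟨a, ha, Or.inr (by rw [e] at h1; exact h1)⟩
    · exact Or.inr (by rw [e] at h1; exact h1.symm)

lemma lfLabels_subG {v u l : ℕ} {Γ : Multiset (LF C)}
    (h : l ∈ lfLabels (subG v u Γ)) : l ∈ lfLabels Γ ∨ l = u := by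
  obtain ⟨b, hb, hl⟩ := h
  obtain ⟨a, ha, rfl⟩ := Multiset.mem_map.1 hb
  rcases subL_cases v u a.1 with e | e
  · exact Or.inl ⟨a, ha, by rw [e] at hl; exact hl⟩
  · exact Or.inr (by rw [e] at hl; exact hl.symm)

lemma chain_sub (v u : ℕ) {s : List C} {a b : ℕ} {m : Multiset (Rel C)}
    (h : Chain s a b m) : Chain s (subL v u a) (subL v u b) (subR v u m) := by
  induction h with
  | nil w => exact Chain.nil _
  | cons h ih => rw [subR_cons]; exact Chain.cons ih

end BotRAux

/-- hp-admissibility of label substitution. -/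
lemma subst_hp (α : Alphabet) (𝒜 : Set (Ax α.Char)) :
    ∀ n (R : Multiset (Rel α.Char)) (Γ : Multiset (LF α.Char)) (w : ℕ)
      (A : Formula α.Char) (v u : ℕ),
      LD α 𝒜 n R Γ w A → LD α 𝒜 n (subR v u R) (subG v u Γ) (subL v u w) A := by
  intro n
  induction n using Nat.strong_induction_on with
  | _ n IH =>
  intro R Γ w A v u hd
  cases hd with
  | id n R Γ w p =>
    rw [subG_cons]; exact LD.id _ _ _ _ _
  | botL n R Γ w t A =>
    rw [subG_cons]; exact LD.botL _ _ _ _ _ _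
  | @orL m R Γ w1 t A1 B1 C1 p1 p2 =>
    have h1 := IH m (by omega) _ _ _ _ v u p1
    have h2 := IH m (by omega) _ _ _ _ v u p2
    rw [subG_cons] at h1 h2
    rw [subG_cons]
    exact LD.orL h1 h2
  | @orR1 m R Γ w1 A1 B1 p1 =>
    exact LD.orR1 (IH m (by omega) _ _ _ _ v u p1)
  | @orR2 m R Γ w1 A1 B1 p1 =>
    exact LD.orR2 (IH m (by omega) _ _ _ _ v u p1)
  | @andL m R Γ w1 t A1 B1 C1 p1 =>
    have h1 := IH m (by omega) _ _ _ _ v u p1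
    rw [subG_cons, subG_cons] at h1
    rw [subG_cons]
    exact LD.andL h1
  | @andR m R Γ w1 A1 B1 p1 p2 =>
    exact LD.andR (IH m (by omega) _ _ _ _ v u p1) (IH m (by omega) _ _ _ _ v u p2)
  | @impL m R Γ w1 t A1 B1 C1 p1 p2 =>
    have h1 := IH m (by omega) _ _ _ _ v u p1
    have h2 := IH m (by omega) _ _ _ _ v u p2
    rw [subG_cons] at h1 h2
    rw [subG_cons]
    exact LD.impL h1 h2
  | @impR m R Γ w1 A1 B1 p1 =>
    have h1 := IH m (by omega) _ _ _ _ v u p1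
    rw [subG_cons] at h1
    exact LD.impR h1
  | @diaL m R Γ w1 f t x A1 B1 hf p1 =>
    obtain ⟨hf1, hf2, hf3⟩ := hf
    rw [mem_lfLabels_cons] at hf2
    push_neg at hf2
    obtain ⟨hfw, hfΓ⟩ := hf2
    set f' := relBound R + lfBound Γ + w1 + w + v + u + 1 with hf'
    have h1 := IH m (by omega) _ _ _ _ f f' p1
    rw [subR_cons, subG_cons, subL_self, subL_ne f' (Ne.symm hfw),
      subL_ne f' (Ne.symm hf3), subR_eq_self f' hf1, subG_eq_self f' hfΓ] at h1
    have h2 := IH m (by omega) _ _ _ _ v u h1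
    rw [subR_cons, subG_cons, subL_ne u (show f' ≠ v by omega)] at h2
    rw [subG_cons]
    refine LD.diaL ⟨?_, ?_, ?_⟩ h2
    · intro hmem
      rcases relLabels_subR hmem with hm | hm
      · have := le_relBound hm; omega
      · omega
    · rw [mem_lfLabels_cons]
      rintro (hm | hm)
      · rcases subL_cases v u w1 with e | e <;> rw [e] at hm <;> omega
      · rcases lfLabels_subG hm with hm | hm
        · have := le_lfBound hm; omega
        · omega
    · rcases subL_cases v u w with e | e <;> rw [e] <;> omega
  | @diaR m R Γ w1 t x A1 p1 =>
    have h1 := IH m (by omega) _ _ _ _ v u p1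
    rw [subR_cons] at h1
    rw [subR_cons]
    exact LD.diaR h1
  | @boxR m R Γ w1 f x A1 hf p1 =>
    obtain ⟨hf1, hf2, hf3⟩ := hf
    set f' := relBound R + lfBound Γ + w + v + u + 1 with hf'
    have h1 := IH m (by omega) _ _ _ _ f f' p1
    rw [subR_cons, subL_self, subL_ne f' (Ne.symm hf3),
      subR_eq_self f' hf1, subG_eq_self f' hf2] at h1
    have h2 := IH m (by omega) _ _ _ _ v u h1
    rw [subR_cons, subL_ne u (show f' ≠ v by omega)] at h2
    refine LD.boxR ⟨?_, ?_, ?_⟩ h2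
    · intro hmem
      rcases relLabels_subR hmem with hm | hm
      · have := le_relBound hm; omega
      · omega
    · intro hmem
      rcases lfLabels_subG hmem with hm | hm
      · have := le_lfBound hm; omega
      · omega
    · rcases subL_cases v u w with e | e <;> rw [e] <;> omega
  | @boxL m R Γ w1 f t x A1 C1 p1 =>
    have h1 := IH m (by omega) _ _ _ _ v u p1
    rw [subR_cons, subG_cons, subG_cons] at h1
    rw [subR_cons, subG_cons]
    exact LD.boxL h1
  | @dx m R Γ f t x A1 w1 hax hf p1 =>
    obtain ⟨hf1, hf2, hf3⟩ := hf
    set f' := relBound R + lfBound Γ + w1 + w + v + u + 1 with hf'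
    have h1 := IH m (by omega) _ _ _ _ f f' p1
    rw [subR_cons, subL_self, subL_ne f' (Ne.symm hf3),
      subR_eq_self f' hf1, subG_eq_self f' hf2] at h1
    have h2 := IH m (by omega) _ _ _ _ v u h1
    rw [subR_cons, subL_ne u (show f' ≠ v by omega)] at h2
    refine LD.dx _ hax (u := f') ⟨?_, ?_, ?_⟩ h2
    · intro hmem
      rcases relLabels_subR hmem with hm | hm
      · have := le_relBound hm; omega
      · omega
    · intro hmem
      rcases lfLabels_subG hmem with hm | hm
      · have := le_lfBound hm; omega
      · omega
    · rcases subL_cases v u w with e | e <;> rw [e] <;> omega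
  | @isx m R Γ w1 t v1 s x mc A1 hax hc p1 =>
    have h1 := IH m (by omega) _ _ _ _ v u p1
    rw [subR_cons, subR_add] at h1
    rw [subR_add]
    exact LD.isx hax (chain_sub v u hc) h1
  | @cx m R Γ w1 t v1 x A1 p1 =>
    have h1 := IH m (by omega) _ _ _ _ v u p1
    rw [subR_cons, subR_cons] at h1
    rw [subR_cons]
    exact LD.cx h1

lemma botR_aux (α : Alphabet) (𝒜 : Set (Ax α.Char)) :
    ∀ n (R : Multiset (Rel α.Char)) (Γ : Multiset (LF α.Char)) (w u : ℕ)
      (A : Formula α.Char),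
      LD α 𝒜 n R Γ w Formula.bot → LD α 𝒜 n R Γ u A := by
  intro n
  induction n using Nat.strong_induction_on with
  | _ n IH =>
  intro R Γ w u A hd
  cases hd with
  | botL n R Γ w1 t A1 =>
    exact LD.botL _ _ _ _ _ _
  | @orL m R Γ w1 t A1 B1 C1 p1 p2 =>
    exact LD.orL (IH m (by omega) _ _ _ u A p1) (IH m (by omega) _ _ _ u A p2)
  | @andL m R Γ w1 t A1 B1 C1 p1 =>
    exact LD.andL (IH m (by omega) _ _ _ u A p1)
  | @impL m R Γ w1 t A1 B1 C1 p1 p2 =>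
    exact LD.impL p1 (IH m (by omega) _ _ _ u A p2)
  | @diaL m R Γ w1 f t x A1 B1 hf p1 =>
    obtain ⟨hf1, hf2, hf3⟩ := hf
    have hf2' := hf2
    rw [mem_lfLabels_cons] at hf2'
    push_neg at hf2'
    obtain ⟨hfw, hfΓ⟩ := hf2'
    set f' := relBound R + lfBound Γ + w1 + w + u + 1 with hf'
    have h1 := subst_hp α 𝒜 m _ _ _ _ f f' p1
    rw [subR_cons, subG_cons, subL_self, subL_ne f' (Ne.symm hfw),
      subL_ne f' (Ne.symm hf3), subR_eq_self f' hf1, subG_eq_self f' hfΓ] at h1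
    have h2 := IH m (by omega) _ _ _ u A h1
    refine LD.diaL ⟨?_, ?_, ?_⟩ h2
    · intro hmem
      have := le_relBound hmem; omega
    · rw [mem_lfLabels_cons]
      rintro (hm | hm)
      · omega
      · have := le_lfBound hm; omega
    · omega
  | @boxL m R Γ w1 f t x A1 C1 p1 =>
    exact LD.boxL (IH m (by omega) _ _ _ u A p1)
  | @dx m R Γ f t x A1 w1 hax hf p1 =>
    obtain ⟨hf1, hf2, hf3⟩ := hf
    set f' := relBound R + lfBound Γ + w1 + w + u + 1 with hf'
    have h1 := subst_hp α 𝒜 m _ _ _ _ f f' p1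
    rw [subR_cons, subL_self, subL_ne f' (Ne.symm hf3),
      subR_eq_self f' hf1, subG_eq_self f' hf2] at h1
    have h2 := IH m (by omega) _ _ _ u A h1
    refine LD.dx _ hax (u := f') ⟨?_, ?_, ?_⟩ h2
    · intro hmem
      have := le_relBound hmem; omega
    · intro hmem
      have := le_lfBound hmem; omega
    · omega
  | @isx m R Γ w1 t v1 s x mc A1 hax hc p1 =>
    exact LD.isx hax hc (IH m (by omega) _ _ _ u A p1)
  | @cx m R Γ w1 t v1 x A1 p1 =>
    exact LD.cx (IH m (by omega) _ _ _ u A p1)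

/-- **hp-admissibility of `(⊥_r)`**: if `R, Γ ⊢ w : ⊥` has a proof of height at
most `h` in `L_Σ(𝒜)`, then `R, Γ ⊢ u : A` has a proof of height at most `h`. -/
theorem botR_hp_admissible (α : Alphabet) (𝒜 : Set (Ax α.Char)) (h : ℕ)
    (R : Multiset (Rel α.Char)) (Γ : Multiset (LF α.Char)) (w u : ℕ)
    (A : Formula α.Char) (hd : LD α 𝒜 h R Γ w Formula.bot) :
    LD α 𝒜 h R Γ u A :=
  botR_aux α 𝒜 h R Γ w u A hd

end IGL
end
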